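/- arXiv:math/0408127 — 6 statements merged into one kernel-verified Lean document; each statement's English description precedes it below -/
import Mathlib

section
/- Let A be a commutative ring and let N be an A-module which is Tor rigid. Then N has property (R); that is, for every exact cochain complex L of finitely generated projective A-modules (indexed by the integers), if the cohomology H^n(L ⊗_A N) vanishes for all sufficiently large n, then H^n(L ⊗_A N) vanishes for all n. -/
open CategoryTheory CategoryTheory.Limits CategoryTheory.MonoidalCategory
  CategoryTheory.Abelian

universe u

/-- An `A`-module `N` is *Tor rigid* if there is `c ≥ 0` such that for every module `Z`
and every `i ≥ 1`, vanishing of `Tor_j(Z,N)` for `i ≤ j ≤ i + c` implies vanishing of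
`Tor_j(Z,N)` for all `j ≥ i`. -/
def TorRigid {A : Type u} [CommRing A] (N : ModuleCat.{u} A) : Prop :=
  ∃ c : ℕ, ∀ (Z : ModuleCat.{u} A) (i : ℕ), 1 ≤ i →
    (∀ j : ℕ, i ≤ j → j ≤ i + c →
      Subsingleton (((Tor (ModuleCat.{u} A) j).obj Z).obj N)) →
    ∀ j : ℕ, i ≤ j → Subsingleton (((Tor (ModuleCat.{u} A) j).obj Z).obj N)

/-- An `A`-module `N` has *property (R)* if for every exact cochain complex `L` of finitely
generated projective `A`-modules (indexed by `ℤ`) such that `H^n(L ⊗_A N) = 0` for all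
sufficiently large `n`, one has `H^n(L ⊗_A N) = 0` for all `n`. -/
def HasPropertyR {A : Type u} [CommRing A] (N : ModuleCat.{u} A) : Prop :=
  ∀ L : CochainComplex (ModuleCat.{u} A) ℤ,
    (∀ n : ℤ, Module.Finite A (L.X n)) →
    (∀ n : ℤ, Projective (L.X n)) →
    (∀ n : ℤ, L.ExactAt n) →
    (∃ n₀ : ℤ, ∀ n : ℤ, n₀ ≤ n →
      (((tensorRight N).mapHomologicalComplex (ComplexShape.up ℤ)).obj L).ExactAt n) →
    ∀ n : ℤ, (((tensorRight N).mapHomologicalComplex (ComplexShape.up ℤ)).obj L).ExactAt n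

section Auxiliary

open LinearMap TensorProduct

namespace TorRigidAux

variable {A : Type u} [CommRing A]

/-! ### Pure linear algebra lemmas -/

theorem exact_comp_iff_injective {X Y Z W : Type u}
    [AddCommGroup X] [AddCommGroup Y] [AddCommGroup Z] [AddCommGroup W]
    [Module A X] [Module A Y] [Module A Z] [Module A W]
    (e : X →ₗ[A] Y) (p : Y →ₗ[A] Z) (ι : Z →ₗ[A] W)
    (hep : Function.Exact e p) (hp : Function.Surjective p) :
    Function.Exact e (ι ∘ₗ p) ↔ Function.Injective ι := by
  rw [LinearMap.exact_iff] at hep ⊢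
  rw [← LinearMap.ker_eq_bot]
  constructor
  · intro h
    rw [LinearMap.ker_comp] at h
    rw [eq_bot_iff]
    rintro z hz
    obtain ⟨y, rfl⟩ := hp z
    have : y ∈ Submodule.comap p (LinearMap.ker ι) := hz
    rw [h, ← hep] at this
    simpa using this
  · intro h
    rw [LinearMap.ker_comp, h, ← hep]
    simp [Submodule.comap_bot]

theorem exact_comp_surjective_iff {X Y Z W : Type u}
    [AddCommGroup X] [AddCommGroup Y] [AddCommGroup Z] [AddCommGroup W]
    [Module A X] [Module A Y] [Module A Z] [Module A W]
    (s : X →ₗ[A] Y) (f : Y →ₗ[A] Z) (g : Z →ₗ[A] W) (hs : Function.Surjective s) :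
    Function.Exact (f ∘ₗ s) g ↔ Function.Exact f g := by
  rw [LinearMap.exact_iff, LinearMap.exact_iff, LinearMap.range_comp_of_range_eq_top]
  rwa [LinearMap.range_eq_top]

theorem snake_half {K Q C M₁ P M : Type u}
    [AddCommGroup K] [AddCommGroup Q] [AddCommGroup C]
    [AddCommGroup M₁] [AddCommGroup P] [AddCommGroup M]
    [Module A K] [Module A Q] [Module A C]
    [Module A M₁] [Module A P] [Module A M]
    (k : K →ₗ[A] Q) (pC : Q →ₗ[A] C) (i : M₁ →ₗ[A] P) (pM : P →ₗ[A] M)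
    (hk : Function.Injective k) (hkpC : Function.Exact k pC) (hpC : Function.Surjective pC)
    (hipM : Function.Exact i pM) (hpM : Function.Surjective pM)
    (hflat : Module.Flat A P)
    (H : Function.Injective (lTensor C i)) :
    Function.Injective (rTensor M k) := by
  rw [← LinearMap.ker_eq_bot, eq_bot_iff]
  intro x hx
  have hx0 : rTensor M k x = 0 := hx
  obtain ⟨x', rfl⟩ := LinearMap.lTensor_surjective K hpM x
  have h1 : lTensor Q pM (rTensor P k x') = 0 := by
    have e : lTensor Q pM ∘ₗ rTensor P k = rTensor M k ∘ₗ lTensor K pM := by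
      rw [lTensor_comp_rTensor, rTensor_comp_lTensor]
    calc lTensor Q pM (rTensor P k x') = (lTensor Q pM ∘ₗ rTensor P k) x' := rfl
      _ = rTensor M k (lTensor K pM x') := LinearMap.congr_fun e x'
      _ = 0 := hx0
  obtain ⟨y, hy⟩ := (lTensor_exact Q hipM hpM (rTensor P k x')).mp h1
  have h2 : lTensor C i (rTensor M₁ pC y) = 0 := by
    have e1 : lTensor C i ∘ₗ rTensor M₁ pC = rTensor P pC ∘ₗ lTensor Q i := by
      rw [lTensor_comp_rTensor, rTensor_comp_lTensor]
    have e2 : lTensor C i (rTensor M₁ pC y) = rTensor P pC (lTensor Q i y) :=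
      LinearMap.congr_fun e1 y
    rw [e2, hy, ← LinearMap.comp_apply, ← rTensor_comp]
    have hz : pC ∘ₗ k = 0 := by ext t; exact hkpC.apply_apply_eq_zero t
    rw [hz]
    simp
  have h3 : rTensor M₁ pC y = 0 :=
    H (by rw [h2, map_zero])
  obtain ⟨z, hz⟩ := (rTensor_exact (M := K) (N := Q) (P := C) M₁ hkpC hpC y).mp h3
  have h4 : rTensor P k (x' - lTensor K i z) = 0 := by
    have e : rTensor P k ∘ₗ lTensor K i = lTensor Q i ∘ₗ rTensor M₁ k := by
      rw [lTensor_comp_rTensor, rTensor_comp_lTensor]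
    have e2 : rTensor P k (lTensor K i z) = lTensor Q i (rTensor M₁ k z) :=
      LinearMap.congr_fun e z
    rw [map_sub, e2, hz, hy, sub_self]
  have h5 : x' = lTensor K i z := by
    have hinj : Function.Injective (rTensor P k) :=
      Module.Flat.rTensor_preserves_injective_linearMap (M := P) k hk
    have := hinj (a₁ := x' - lTensor K i z) (a₂ := 0) (by simpa using h4)
    exact sub_eq_zero.mp this
  have : lTensor K pM x' = 0 := by
    rw [h5, ← LinearMap.comp_apply, ← lTensor_comp]
    have hz0 : pM ∘ₗ i = 0 := by ext t; exact hipM.apply_apply_eq_zero t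
    rw [hz0]
    simp
  simpa using this

theorem step_half {C R X₁ G : Type u}
    [AddCommGroup C] [AddCommGroup R] [AddCommGroup X₁] [AddCommGroup G]
    [Module A C] [Module A R] [Module A X₁] [Module A G]
    (ι : C →ₗ[A] R) (iX : X₁ →ₗ[A] G) (hι : Function.Injective ι)
    (hflat : Module.Flat A G)
    (H : Function.Injective (rTensor C iX)) :
    Function.Injective (rTensor X₁ ι) := by
  have HL : Function.Injective (lTensor C iX) :=
    (lTensor_inj_iff_rTensor_inj C iX).mpr H
  rw [← LinearMap.ker_eq_bot, eq_bot_iff]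
  intro x hx
  have hx0 : rTensor X₁ ι x = 0 := hx
  have h1 : rTensor G ι (lTensor C iX x) = 0 := by
    have e : rTensor G ι ∘ₗ lTensor C iX = lTensor R iX ∘ₗ rTensor X₁ ι := by
      rw [lTensor_comp_rTensor, rTensor_comp_lTensor]
    have h := LinearMap.congr_fun e x
    simp only [LinearMap.comp_apply] at h
    rw [h, hx0, map_zero]
  have h2 : lTensor C iX x = 0 :=
    Module.Flat.rTensor_preserves_injective_linearMap (M := G) ι hι
      (by rw [h1, map_zero])
  simpa using HL (by rw [h2, map_zero] : lTensor C iX x = lTensor C iX 0)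

theorem step_iff {C R X₁ G : Type u}
    [AddCommGroup C] [AddCommGroup R] [AddCommGroup X₁] [AddCommGroup G]
    [Module A C] [Module A R] [Module A X₁] [Module A G]
    (ι : C →ₗ[A] R) (iX : X₁ →ₗ[A] G)
    (hι : Function.Injective ι) (hiX : Function.Injective iX)
    (hG : Module.Flat A G) (hR : Module.Flat A R) :
    Function.Injective (rTensor X₁ ι) ↔ Function.Injective (rTensor C iX) :=
  ⟨fun H => step_half iX ι hiX hR H, fun H => step_half ι iX hι hG H⟩

theorem snake_iff {K Q C M₁ P M : Type u}
    [AddCommGroup K] [AddCommGroup Q] [AddCommGroup C]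
    [AddCommGroup M₁] [AddCommGroup P] [AddCommGroup M]
    [Module A K] [Module A Q] [Module A C]
    [Module A M₁] [Module A P] [Module A M]
    (k : K →ₗ[A] Q) (pC : Q →ₗ[A] C) (i : M₁ →ₗ[A] P) (pM : P →ₗ[A] M)
    (hk : Function.Injective k) (hkpC : Function.Exact k pC) (hpC : Function.Surjective pC)
    (hi : Function.Injective i) (hipM : Function.Exact i pM) (hpM : Function.Surjective pM)
    (hQ : Module.Flat A Q) (hP : Module.Flat A P) :
    Function.Injective (rTensor M k) ↔ Function.Injective (rTensor C i) := by
  constructor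
  · intro H
    exact snake_half i pM k pC hi hipM hpM hkpC hpC hQ
      ((lTensor_inj_iff_rTensor_inj M k).mpr H)
  · intro H
    exact snake_half k pC i pM hk hkpC hpC hipM hpM hP
      ((lTensor_inj_iff_rTensor_inj C i).mpr H)

/-! ### Categorical bridges -/

theorem flat_of_cat_projective (M : ModuleCat.{u} A) (h : Projective M) : Module.Flat A M := by
  have : Module.Projective A M := by
    rw [IsProjective.iff_projective]
    exact h
  exact Module.Flat.of_projective

theorem moduleCat_isZero_iff (M : ModuleCat.{u} A) : IsZero M ↔ Subsingleton M := by
  constructor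
  · intro h
    have h0 : (𝟙 M : M ⟶ M) = 0 := h.eq_of_src _ _
    refine ⟨fun a b => ?_⟩
    calc a = (𝟙 M : M ⟶ M) a := rfl
      _ = (0 : M ⟶ M) a := by rw [h0]
      _ = (𝟙 M : M ⟶ M) b := by rw [h0]; rfl
      _ = b := rfl
  · intro h
    exact ModuleCat.isZero_of_subsingleton M

theorem exactAt_iff_exact {ι : Type} {c : ComplexShape ι}
    (K : HomologicalComplex (ModuleCat.{u} A) c)
    (i j k : ι) (hi : c.prev j = i) (hk : c.next j = k) :
    K.ExactAt j ↔ Function.Exact (K.d i j) (K.d j k) := by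
  rw [HomologicalComplex.exactAt_iff' K i j k hi hk,
    ShortComplex.moduleCat_exact_iff_range_eq_ker, LinearMap.exact_iff]
  exact comm

/-! ### The cokernel modules of the complex `L` -/

variable (L : CochainComplex (ModuleCat.{u} A) ℤ)

/-- The cokernel of `L.d (n-1) n`. -/
def CM (n : ℤ) : ModuleCat.{u} A :=
  ModuleCat.of A ((L.X n) ⧸ (LinearMap.range ((L.d (n-1) n).hom : L.X (n-1) →ₗ[A] L.X n)))

/-- The projection onto the cokernel. -/
def piC (n : ℤ) : L.X n →ₗ[A] CM L n :=
  (LinearMap.range ((L.d (n-1) n).hom : L.X (n-1) →ₗ[A] L.X n)).mkQ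

/-- The induced map from the cokernel of `L.d (n-1) n` to `L.X (n+1)`. -/
def iotaC (n : ℤ) : CM L n →ₗ[A] L.X (n+1) :=
  Submodule.liftQ _ (L.d n (n+1)).hom (by
    rw [LinearMap.range_le_ker_iff]
    have : L.d (n-1) n ≫ L.d n (n+1) = 0 := L.d_comp_d _ _ _
    exact congrArg ModuleCat.Hom.hom this)

theorem iotaC_comp_piC (n : ℤ) : (iotaC L n) ∘ₗ (piC L n) = (L.d n (n+1)).hom :=
  Submodule.liftQ_mkQ _ _ _

theorem piC_surjective (n : ℤ) : Function.Surjective (piC L n) :=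
  Submodule.mkQ_surjective _

theorem exact_d_piC (n : ℤ) : Function.Exact (L.d (n-1) n) (piC L n) :=
  LinearMap.exact_iff.mpr (Submodule.ker_mkQ _)

theorem range_d_congr (K : CochainComplex (ModuleCat.{u} A) ℤ) (i i' j : ℤ) (h : i = i') :
    LinearMap.range ((K.d i j).hom : K.X i →ₗ[A] K.X j)
      = LinearMap.range ((K.d i' j).hom : K.X i' →ₗ[A] K.X j) := by
  subst h
  rfl

theorem range_iotaC (n : ℤ) :
    LinearMap.range (iotaC L n) = LinearMap.range ((L.d n (n+1)).hom : L.X n →ₗ[A] L.X (n+1)) :=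
  Submodule.range_liftQ _ _ _

theorem iotaC_injective (n : ℤ) (hex : L.ExactAt n) : Function.Injective (iotaC L n) := by
  rw [← LinearMap.ker_eq_bot]
  apply Submodule.ker_liftQ_eq_bot
  rw [(exactAt_iff_exact L (n-1) n (n+1) (by simp) (by simp)).mp hex |> LinearMap.exact_iff.mp]

theorem exact_iotaC_piC (n : ℤ) : Function.Exact (iotaC L n) (piC L (n+1)) := by
  rw [LinearMap.exact_iff, range_iotaC, piC]
  erw [Submodule.ker_mkQ]
  exact (range_d_congr L _ _ _ (by ring)).trans rfl |>.symm.trans rfl |>.symm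

/-! ### Syzygies of a projective resolution -/

variable {N : ModuleCat.{u} A} (P : ProjectiveResolution N)

/-- The syzygy modules of a projective resolution. -/
def MK : ℕ → ModuleCat.{u} A
  | 0 => N
  | (k+1) => ModuleCat.of A
      (LinearMap.range ((P.complex.d (k+1) k).hom : P.complex.X (k+1) →ₗ[A] P.complex.X k))

/-- Inclusion of the `(k+1)`-st syzygy in the `k`-th term of the resolution. -/
def iK (k : ℕ) : MK P (k+1) →ₗ[A] P.complex.X k :=
  Submodule.subtype _

/-- Projection of the `k`-th term of the resolution onto the `k`-th syzygy. -/
noncomputable def pK : ∀ k : ℕ, (P.complex.X k →ₗ[A] MK P k)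
  | 0 => (HomologicalComplex.singleObjXSelf (ComplexShape.down ℕ) 0 N).hom.hom ∘ₗ
      ((P.π.f 0).hom : P.complex.X 0 →ₗ[A] _)
  | (k+1) => ((P.complex.d (k+1) k).hom : P.complex.X (k+1) →ₗ[A] P.complex.X k).rangeRestrict

theorem iK_injective (k : ℕ) : Function.Injective (iK P k) :=
  Submodule.injective_subtype _

theorem iK_comp_pK (k : ℕ) :
    (iK P k) ∘ₗ (pK P (k+1)) = ((P.complex.d (k+1) k).hom : P.complex.X (k+1) →ₗ[A] P.complex.X k) :=
  ((P.complex.d (k+1) k).hom : P.complex.X (k+1) →ₗ[A] P.complex.X k).subtype_comp_codRestrict _ _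

theorem pK_surjective (k : ℕ) : Function.Surjective (pK P k) := by
  cases k with
  | zero =>
      have hs : Function.Surjective
          ((HomologicalComplex.singleObjXSelf (ComplexShape.down ℕ) 0 N).hom) := by
        rw [← ModuleCat.epi_iff_surjective]
        infer_instance
      have hπ : Function.Surjective ((P.π.f 0).hom : P.complex.X 0 →ₗ[A] _) := by
        rw [← ModuleCat.epi_iff_surjective]
        infer_instance
      show Function.Surjective
          (⇑((HomologicalComplex.singleObjXSelf (ComplexShape.down ℕ) 0 N).hom.hom ∘ₗ
            ((P.π.f 0).hom : P.complex.X 0 →ₗ[A] _)))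
      rw [LinearMap.coe_comp]
      exact hs.comp hπ
  | succ k => exact LinearMap.surjective_rangeRestrict _

theorem exact_iK_pK (k : ℕ) : Function.Exact (iK P k) (pK P k) := by
  rw [LinearMap.exact_iff]
  have hrange : LinearMap.range (iK P k)
      = LinearMap.range ((P.complex.d (k+1) k).hom : P.complex.X (k+1) →ₗ[A] P.complex.X k) := by
    rw [iK]; exact Submodule.range_subtype _
  rw [hrange]
  cases k with
  | zero =>
      have h1 : LinearMap.ker (pK P 0) = LinearMap.ker ((P.π.f 0).hom : P.complex.X 0 →ₗ[A] _) := by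
        rw [pK]; refine (LinearMap.ker_comp _ _).trans ?_
        have : LinearMap.ker
            ((HomologicalComplex.singleObjXSelf (ComplexShape.down ℕ) 0 N).hom.hom
              : _ →ₗ[A] _) = ⊥ := by
          rw [LinearMap.ker_eq_bot]
          intro a b hab
          calc a = (HomologicalComplex.singleObjXSelf (ComplexShape.down ℕ) 0 N).inv
                ((HomologicalComplex.singleObjXSelf (ComplexShape.down ℕ) 0 N).hom a) :=
              (ConcreteCategory.congr_hom
                ((HomologicalComplex.singleObjXSelf (ComplexShape.down ℕ) 0 N).hom_inv_id) a).symm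
            _ = (HomologicalComplex.singleObjXSelf (ComplexShape.down ℕ) 0 N).inv
                ((HomologicalComplex.singleObjXSelf (ComplexShape.down ℕ) 0 N).hom b) := by
                rw [hab]
            _ = b := ConcreteCategory.congr_hom
                ((HomologicalComplex.singleObjXSelf (ComplexShape.down ℕ) 0 N).hom_inv_id) b
        erw [this, Submodule.comap_bot]
      rw [h1]
      have := P.exact₀
      rw [ShortComplex.moduleCat_exact_iff_range_eq_ker] at this
      exact this.symm
  | succ k =>
      have h1 : LinearMap.ker (pK P (k+1))
          = LinearMap.ker ((P.complex.d (k+1) k).hom : P.complex.X (k+1) →ₗ[A] P.complex.X k) :=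
        LinearMap.ker_rangeRestrict _
      rw [h1]
      have hex := P.complex_exactAt_succ k
      have h2 := (exactAt_iff_exact (ι := ℕ) P.complex (k+1+1) (k+1) k
        (by simp) (by simp)).mp hex
      rw [LinearMap.exact_iff] at h2
      exact h2

theorem u_congr {W : Type u} [AddCommGroup W] [Module A W] {q q' : ℤ} (h : q = q') :
    Function.Injective (rTensor W (iotaC L q)) ↔ Function.Injective (rTensor W (iotaC L q')) := by
  subst h
  exact Iff.rfl

theorem lemA (W : ModuleCat.{u} A) (n : ℤ) :
    ((((tensorRight W).mapHomologicalComplex (ComplexShape.up ℤ)).obj L).ExactAt n)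
      ↔ Function.Injective (rTensor W (iotaC L n)) := by
  rw [exactAt_iff_exact (ι := ℤ) _ (n-1) n (n+1) (by simp) (by simp)]
  have hfac : ((L.d n (n+1)).hom : L.X n →ₗ[A] L.X (n+1)) = (iotaC L n) ∘ₗ (piC L n) :=
    (iotaC_comp_piC L n).symm
  show Function.Exact (rTensor W ((L.d (n-1) n).hom : L.X (n-1) →ₗ[A] L.X n))
      (rTensor W ((L.d n (n+1)).hom : L.X n →ₗ[A] L.X (n+1))) ↔ _
  rw [hfac, rTensor_comp]
  exact exact_comp_iff_injective _ _ _
    (rTensor_exact W (exact_d_piC L n) (piC_surjective L n))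
    (LinearMap.rTensor_surjective _ (piC_surjective L n))

theorem lemB (Z : ModuleCat.{u} A) (k : ℕ) :
    (((((tensoringLeft (ModuleCat.{u} A)).obj Z).mapHomologicalComplex
        (ComplexShape.down ℕ)).obj P.complex).ExactAt (k+1))
      ↔ Function.Injective (lTensor Z (iK P k)) := by
  rw [exactAt_iff_exact (ι := ℕ) _ (k+1+1) (k+1) k (by simp) (by simp)]
  show Function.Exact
      (lTensor Z ((P.complex.d (k+1+1) (k+1)).hom : P.complex.X (k+1+1) →ₗ[A] P.complex.X (k+1)))
      (lTensor Z ((P.complex.d (k+1) k).hom : P.complex.X (k+1) →ₗ[A] P.complex.X k)) ↔ _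
  have h2 : ((P.complex.d (k+1+1) (k+1)).hom : P.complex.X (k+1+1) →ₗ[A] P.complex.X (k+1))
      = (iK P (k+1)) ∘ₗ (pK P (k+1+1)) := (iK_comp_pK P (k+1)).symm
  have h1 : ((P.complex.d (k+1) k).hom : P.complex.X (k+1) →ₗ[A] P.complex.X k)
      = (iK P k) ∘ₗ (pK P (k+1)) := (iK_comp_pK P k).symm
  rw [h1, h2, lTensor_comp, lTensor_comp]
  rw [exact_comp_surjective_iff _ _ _ (LinearMap.lTensor_surjective _ (pK_surjective P (k+1+1)))]
  exact exact_comp_iff_injective _ _ _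
    (lTensor_exact Z (exact_iK_pK P (k+1)) (pK_surjective P (k+1)))
    (LinearMap.lTensor_surjective _ (pK_surjective P (k+1)))

theorem torB (Z : ModuleCat.{u} A) (j : ℕ) :
    Subsingleton (((Tor (ModuleCat.{u} A) j).obj Z).obj N) ↔
    (((((tensoringLeft (ModuleCat.{u} A)).obj Z).mapHomologicalComplex
        (ComplexShape.down ℕ)).obj P.complex).ExactAt j) := by
  have e : ((Tor (ModuleCat.{u} A) j).obj Z).obj N ≅
      ((((((tensoringLeft (ModuleCat.{u} A)).obj Z).mapHomologicalComplex
        (ComplexShape.down ℕ)).obj P.complex)).homology j) :=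
    P.isoLeftDerivedObj _ j
  rw [HomologicalComplex.exactAt_iff_isZero_homology, ← moduleCat_isZero_iff]
  exact Iff.intro (fun h => h.of_iso e.symm) (fun h => h.of_iso e)

end TorRigidAux

end Auxiliary


/-- If `N` is a Tor rigid module over a commutative ring `A`, then `N` has property (R). -/
theorem torRigid_hasPropertyR {A : Type u} [CommRing A] (N : ModuleCat.{u} A)
    (hN : TorRigid N) : HasPropertyR N := by
  classical
  open LinearMap TensorProduct TorRigidAux in
  obtain ⟨c, hc⟩ := hN
  intro L hfin hproj hexL hbnd n
  obtain ⟨n₀, hn₀⟩ := hbnd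
  let P : ProjectiveResolution N := ProjectiveResolution.of N
  have flatL : ∀ q : ℤ, Module.Flat A (L.X q) := fun q => flat_of_cat_projective _ (hproj q)
  have flatP : ∀ k : ℕ, Module.Flat A (P.complex.X k) :=
    fun k => flat_of_cat_projective _ inferInstance
  have hsnake : ∀ (q : ℤ) (k : ℕ),
      Function.Injective (rTensor (MK P k) (iotaC L q)) ↔
      Function.Injective (rTensor (CM L (q+1)) (iK P k)) := fun q k =>
    snake_iff (iotaC L q) (piC L (q+1)) (iK P k) (pK P k)
      (iotaC_injective L q (hexL q)) (exact_iotaC_piC L q) (piC_surjective L (q+1))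
      (iK_injective P k) (exact_iK_pK P k) (pK_surjective P k)
      (flatL (q+1)) (flatP k)
  have hstep : ∀ (q : ℤ) (k : ℕ),
      Function.Injective (rTensor (MK P (k+1)) (iotaC L (q+1))) ↔
      Function.Injective (rTensor (CM L (q+1)) (iK P k)) := fun q k =>
    step_iff (iotaC L (q+1)) (iK P k) (iotaC_injective L (q+1) (hexL (q+1)))
      (iK_injective P k) (flatP k) (flatL (q+1+1))
  have hshift : ∀ (q : ℤ) (k : ℕ),
      Function.Injective (rTensor (MK P k) (iotaC L q)) ↔
      Function.Injective (rTensor (MK P (k+1)) (iotaC L (q+1))) := fun q k =>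
    (hsnake q k).trans (hstep q k).symm
  have hchain : ∀ (k : ℕ) (q : ℤ),
      Function.Injective (rTensor (MK P 0) (iotaC L q)) ↔
      Function.Injective (rTensor (MK P k) (iotaC L (q + (k:ℤ)))) := by
    intro k
    induction k with
    | zero =>
        intro q
        exact u_congr L (by simp)
    | succ k ih =>
        intro q
        exact (ih q).trans ((hshift (q + (k:ℤ)) k).trans (u_congr L (by push_cast; ring)))
  have hA : ∀ m : ℤ,
      ((((tensorRight N).mapHomologicalComplex (ComplexShape.up ℤ)).obj L).ExactAt m) ↔
      Function.Injective (rTensor (MK P 0) (iotaC L m)) := fun m => lemA L N m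
  set q₁ : ℤ := n₀ + c with hq₁
  have hTor : ∀ k : ℕ,
      Subsingleton (((Tor (ModuleCat.{u} A) (k+1)).obj (CM L (q₁+1))).obj N) ↔
      Function.Injective (rTensor (CM L (q₁+1)) (iK P k)) := fun k =>
    (torB P _ (k+1)).trans ((lemB P _ k).trans (lTensor_inj_iff_rTensor_inj _ _))
  have hwin : ∀ j : ℕ, 1 ≤ j → j ≤ 1 + c →
      Subsingleton (((Tor (ModuleCat.{u} A) j).obj (CM L (q₁+1))).obj N) := by
    intro j hj1 hjc
    obtain ⟨k, rfl⟩ : ∃ k, j = k + 1 := ⟨j - 1, by omega⟩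
    rw [hTor k, ← hsnake q₁ k]
    have h0 : Function.Injective (rTensor (MK P 0) (iotaC L (q₁ - (k:ℤ)))) :=
      (hA (q₁ - (k:ℤ))).mp (hn₀ _ (by omega))
    exact (u_congr L (by ring)).mp ((hchain k (q₁ - (k:ℤ))).mp h0)
  have hall := hc (CM L (q₁+1)) 1 le_rfl hwin
  have huq₁ : ∀ k : ℕ, Function.Injective (rTensor (MK P k) (iotaC L q₁)) := fun k =>
    (hsnake q₁ k).mpr ((hTor k).mp (hall (k+1) (by omega)))
  by_cases hcase : n₀ ≤ n
  · exact hn₀ n hcase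
  · have hle : n ≤ q₁ := by omega
    rw [hA n]
    have hnk : q₁ = n + (((q₁ - n).toNat : ℕ) : ℤ) := by
      have := Int.toNat_of_nonneg (show (0:ℤ) ≤ q₁ - n by omega)
      omega
    exact (hchain (q₁ - n).toNat n).mpr ((u_congr L hnk).mp (huq₁ (q₁ - n).toNat))
end

section
/- Let A be a commutative ring with id_A(A) < ∞ (i.e., there exists d such that Ext_A^i(X,A) = 0 for every A-module X and every i > d) which has the AB property. Then every finitely generated A-module N has property (R). -/
open CategoryTheory CategoryTheory.Limits CategoryTheory.MonoidalCategory
  CategoryTheory.Abelian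

universe u

/-- A commutative ring `A` has the *AB property* if there is `c ≥ 1` such that for all
finitely generated modules `M`, `N`: if `Ext^i(M,N) = 0` for `i ≫ 0` then `Ext^i(M,N) = 0`
for all `i ≥ c`. -/
def HasABProperty (A : Type u) [CommRing A] : Prop :=
  ∃ c : ℕ, 1 ≤ c ∧ ∀ M N : ModuleCat.{u} A, Module.Finite A M → Module.Finite A N →
    (∃ i₀ : ℕ, ∀ i : ℕ, i₀ ≤ i →
      Subsingleton (((Ext ℤ (ModuleCat.{u} A) i).obj (Opposite.op M)).obj N)) →
    ∀ i : ℕ, c ≤ i →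
      Subsingleton (((Ext ℤ (ModuleCat.{u} A) i).obj (Opposite.op M)).obj N)




namespace AuxPropR

variable {A : Type u} [CommRing A]

lemma subsingleton_of_iso {R : Type*} [Ring R] {M N : ModuleCat R} (e : M ≅ N)
    [h : Subsingleton N] : Subsingleton M := by
  constructor
  intro a b
  have h1 : e.inv (e.hom a) = e.inv (e.hom b) := by
    rw [Subsingleton.elim (e.hom a) (e.hom b)]
  have h2 : ∀ x : M, e.inv (e.hom x) = x := fun x => by
    have := e.hom_inv_id
    calc e.inv (e.hom x) = (e.hom ≫ e.inv) x := rfl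
    _ = (𝟙 M : M ⟶ M) x := by rw [this]
    _ = x := rfl
  rw [h2, h2] at h1
  exact h1

lemma subsingleton_iff_isZero {R : Type*} [Ring R] (M : ModuleCat R) :
    Subsingleton M ↔ IsZero M := by
  constructor
  · intro h; exact ModuleCat.isZero_of_subsingleton M
  · intro h
    rw [IsZero.iff_id_eq_zero] at h
    constructor
    intro a b
    calc a = (𝟙 M : M ⟶ M) a := rfl
    _ = ((0 : M ⟶ M)) a := by rw [h]
    _ = 0 := rfl
    _ = ((0 : M ⟶ M)) b := rfl
    _ = (𝟙 M : M ⟶ M) b := by rw [h]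
    _ = b := rfl

/-- Concrete criterion for exactness of a `ℤ`-indexed cochain complex of modules. -/
lemma exactAt_iff_concrete (W : CochainComplex (ModuleCat.{u} A) ℤ) (n : ℤ) :
    W.ExactAt n ↔ ∀ x : W.X n, W.d n (n + 1) x = 0 →
      ∃ y : W.X (n - 1), W.d (n - 1) n y = x := by
  rw [W.exactAt_iff' (n - 1) n (n + 1)
    ((ComplexShape.up ℤ).prev_eq' (by simp))
    ((ComplexShape.up ℤ).next_eq' (by simp))]
  exact ShortComplex.moduleCat_exact_iff _

/-- Concrete exactness of `Hom(W, Y)` at position `p`. -/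
def HomExact (W : CochainComplex (ModuleCat.{u} A) ℤ) (Y : ModuleCat.{u} A) (p : ℤ) : Prop :=
  ∀ f : W.X p ⟶ Y, W.d (p - 1) p ≫ f = 0 → ∃ g : W.X (p + 1) ⟶ Y, W.d p (p + 1) ≫ g = f

end AuxPropR
namespace AuxPropR

variable {A : Type u} [CommRing A]

/-- Concrete criterion for exactness of a `ℤ`-indexed cochain complex of modules,
with flexible index expressions. -/
lemma exactAt_iff_concrete' (W : CochainComplex (ModuleCat.{u} A) ℤ) (a b c : ℤ)
    (hab : a + 1 = b) (hbc : b + 1 = c) :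
    W.ExactAt b ↔ ∀ x : W.X b, W.d b c x = 0 → ∃ y : W.X a, W.d a b y = x := by
  rw [W.exactAt_iff' a b c
    ((ComplexShape.up ℤ).prev_eq' (by simpa using hab))
    ((ComplexShape.up ℤ).next_eq' (by simpa using hbc))]
  exact ShortComplex.moduleCat_exact_iff _

/-- Concrete exactness of `Hom(W, Y)` at a triple of positions. -/
def HomExactAt (W : CochainComplex (ModuleCat.{u} A) ℤ) (Y : ModuleCat.{u} A)
    (a b c : ℤ) : Prop :=
  ∀ f : W.X b ⟶ Y, W.d a b ≫ f = 0 → ∃ g : W.X c ⟶ Y, W.d b c ≫ g = f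

lemma homExactAt_congr (W : CochainComplex (ModuleCat.{u} A) ℤ) (Y : ModuleCat.{u} A)
    {a b c a' b' c' : ℤ} (ha : a = a') (hb : b = b') (hc : c = c') :
    HomExactAt W Y a b c ↔ HomExactAt W Y a' b' c' := by
  subst ha; subst hb; subst hc; rfl

variable (T : CochainComplex (ModuleCat.{u} A) ℤ) (m : ℤ)

/-- The `ℕ`-indexed chain complex `... → T^{m-3} → T^{m-2} → T^{m-1}` obtained by
cutting `T` below position `m`. -/
noncomputable def cut : ChainComplex (ModuleCat.{u} A) ℕ :=
  ChainComplex.of (fun j => T.X (m - 1 - (j : ℤ)))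
    (fun j => T.d (m - 1 - ((j + 1 : ℕ) : ℤ)) (m - 1 - (j : ℤ)))
    (fun j => T.d_comp_d _ _ _)

@[simp] lemma cut_X (j : ℕ) : (cut T m).X j = T.X (m - 1 - (j : ℤ)) := rfl

lemma cut_d (j : ℕ) :
    (cut T m).d (j + 1) j = T.d (m - 1 - ((j + 1 : ℕ) : ℤ)) (m - 1 - (j : ℤ)) := by
  simp [cut]

/-- The module of cocycles of `T` in degree `m`. -/
noncomputable def cocyc : ModuleCat.{u} A :=
  ModuleCat.of A (LinearMap.ker ((T.d m (m + 1)).hom : T.X m →ₗ[A] T.X (m + 1)))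

/-- The augmentation `T^{m-1} → Z^m(T)`. -/
noncomputable def aug : (cut T m).X 0 ⟶ cocyc T m :=
  ModuleCat.ofHom <| LinearMap.codRestrict (LinearMap.ker (T.d m (m + 1)).hom)
    (T.d (m - 1 - ((0 : ℕ) : ℤ)) m).hom (fun x => by
    have h : (T.d (m - 1 - ((0 : ℕ) : ℤ)) m ≫ T.d m (m + 1)) x = 0 := by
      rw [T.d_comp_d]; rfl
    exact LinearMap.mem_ker.mpr h)

lemma aug_surjective (hT : T.ExactAt m) : Function.Surjective (aug T m) := by
  have hT' := (exactAt_iff_concrete' T (m - 1 - ((0 : ℕ) : ℤ)) m (m + 1)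
    (by push_cast; ring) rfl).mp hT
  rintro ⟨x, hx⟩
  obtain ⟨y, hy⟩ := hT' x hx
  exact ⟨y, Subtype.ext hy⟩

end AuxPropR
namespace AuxPropR

variable {A : Type u} [CommRing A]
variable (T : CochainComplex (ModuleCat.{u} A) ℤ) (m : ℤ)

lemma cut_d' (i j : ℕ) (h : j + 1 = i) :
    (cut T m).d i j = T.d (m - 1 - (i : ℤ)) (m - 1 - (j : ℤ)) := by
  subst h; simp [cut]

lemma cut_exactAt (hT : ∀ n : ℤ, T.ExactAt n) (j : ℕ) : (cut T m).ExactAt (j + 1) := by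
  rw [(cut T m).exactAt_iff' (j + 1 + 1) (j + 1) j
    ((ComplexShape.down ℕ).prev_eq' (by simp))
    ((ComplexShape.down ℕ).next_eq' (by simp)),
    ShortComplex.moduleCat_exact_iff]
  intro x hx
  have hx' : T.d (m - 1 - ((j + 1 : ℕ) : ℤ)) (m - 1 - (j : ℤ)) x = 0 := by
    rw [← cut_d' T m (j + 1) j rfl]; exact hx
  obtain ⟨y, hy⟩ := (exactAt_iff_concrete' T (m - 1 - ((j + 1 + 1 : ℕ) : ℤ))
    (m - 1 - ((j + 1 : ℕ) : ℤ)) (m - 1 - (j : ℤ))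
    (by push_cast; ring) (by push_cast; ring)).mp (hT _) x hx'
  refine ⟨y, ?_⟩
  show (cut T m).d (j + 1 + 1) (j + 1) y = x
  rw [cut_d' T m (j + 1 + 1) (j + 1) rfl]; exact hy

lemma aug_d : (cut T m).d 1 0 ≫ aug T m = 0 := by
  apply ModuleCat.hom_ext
  apply LinearMap.ext
  intro x
  apply Subtype.ext
  show (T.d (m - 1 - ((0 : ℕ) : ℤ)) m) ((cut T m).d 1 0 x) = 0
  rw [cut_d' T m 1 0 rfl]
  have h : (T.d (m - 1 - ((1 : ℕ) : ℤ)) (m - 1 - ((0 : ℕ) : ℤ)) ≫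
      T.d (m - 1 - ((0 : ℕ) : ℤ)) m) x = 0 := by rw [T.d_comp_d]; rfl
  exact h

/-- The tail of an everywhere-exact cochain complex of projectives is a projective
resolution of the cocycle module. -/
noncomputable def cutRes (hT : ∀ n : ℤ, T.ExactAt n) (hP : ∀ n : ℤ, Projective (T.X n)) :
    ProjectiveResolution (cocyc T m) where
  complex := cut T m
  projective n := hP _
  π := (ChainComplex.toSingle₀Equiv _ _).symm ⟨aug T m, aug_d T m⟩
  quasiIso := ⟨fun n => by
    have epi0 : ((ChainComplex.toSingle₀Equiv (cut T m) (cocyc T m)).symm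
        ⟨aug T m, aug_d T m⟩).f 0 = aug T m :=
      ChainComplex.toSingle₀Equiv_symm_apply_f_zero _ _
    cases n with
    | zero =>
      rw [ChainComplex.quasiIsoAt₀_iff, ShortComplex.quasiIso_iff_of_zeros']
      · constructor
        · rw [ShortComplex.moduleCat_exact_iff]
          intro x hx
          have hx' : T.d (m - 1 - ((0 : ℕ) : ℤ)) m x = 0 := by
            have : aug T m x = 0 := by rw [← epi0]; exact hx
            exact congrArg Subtype.val this
          obtain ⟨y, hy⟩ := (exactAt_iff_concrete' T (m - 1 - ((1 : ℕ) : ℤ))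
            (m - 1 - ((0 : ℕ) : ℤ)) m (by push_cast; ring) (by push_cast; ring)).mp
            (hT _) x hx'
          refine ⟨y, ?_⟩
          show (cut T m).d 1 0 y = x
          rw [cut_d' T m 1 0 rfl]; exact hy
        · rw [ModuleCat.epi_iff_surjective]
          show Function.Surjective (((ChainComplex.toSingle₀Equiv (cut T m)
            (cocyc T m)).symm ⟨aug T m, aug_d T m⟩).f 0)
          rw [epi0]
          exact aug_surjective T m (hT m)
      · exact (cut T m).shape 0 0 (by simp)
      · rfl
      · rfl
    | succ n =>
      rw [quasiIsoAt_iff_exactAt' _ _ (ChainComplex.exactAt_succ_single_obj _ n)]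
      exact cut_exactAt T m hT n⟩

end AuxPropR
namespace AuxPropR

variable {A : Type u} [CommRing A]
variable (T : CochainComplex (ModuleCat.{u} A) ℤ) (m : ℤ)

lemma yoneda_d_apply (Y : ModuleCat.{u} A) (i i' : ℕ)
    (f : ((cut T m).linearYonedaObj ℤ Y).X i) :
    ((cut T m).linearYonedaObj ℤ Y).d i i' f = (cut T m).d i' i ≫ f := by
  have h := congrArg (fun (φ : ((cut T m).linearYonedaObj ℤ Y).X i ⟶
      ((cut T m).linearYonedaObj ℤ Y).X i') => φ f)
    (ChainComplex.linearYonedaObj_d (cut T m) ℤ Y i i')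
  exact h

/-- `Ext^{j+1}(Z^m(T), Y)` is subsingleton iff `Hom(T,Y)` is exact at the corresponding spot. -/
lemma subsingleton_ext_iff (hT : ∀ n : ℤ, T.ExactAt n) (hP : ∀ n : ℤ, Projective (T.X n))
    (Y : ModuleCat.{u} A) (j : ℕ) :
    Subsingleton (((Ext ℤ (ModuleCat.{u} A) (j + 1)).obj (Opposite.op (cocyc T m))).obj Y) ↔
      HomExactAt T Y (m - 1 - ((j + 1 + 1 : ℕ) : ℤ)) (m - 1 - ((j + 1 : ℕ) : ℤ))
        (m - 1 - (j : ℤ)) := by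
  have e : (((Ext ℤ (ModuleCat.{u} A) (j + 1)).obj (Opposite.op (cocyc T m))).obj Y) ≅
      ((cut T m).linearYonedaObj ℤ Y).homology (j + 1) :=
    (cutRes T m hT hP).isoExt (R := ℤ) (j + 1) Y
  have h1 : Subsingleton (((Ext ℤ (ModuleCat.{u} A) (j + 1)).obj
      (Opposite.op (cocyc T m))).obj Y) ↔
      Subsingleton (((cut T m).linearYonedaObj ℤ Y).homology (j + 1)) := by
    constructor
    · intro h; exact subsingleton_of_iso e.symm
    · intro h; exact subsingleton_of_iso e
  rw [h1, subsingleton_iff_isZero, ← HomologicalComplex.exactAt_iff_isZero_homology,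
    HomologicalComplex.exactAt_iff' _ j (j + 1) (j + 1 + 1)
      ((ComplexShape.up ℕ).prev_eq' (by simp))
      ((ComplexShape.up ℕ).next_eq' (by simp)),
    ShortComplex.moduleCat_exact_iff]
  constructor
  · intro h f hf
    have hf' : ((cut T m).linearYonedaObj ℤ Y).d (j + 1) (j + 1 + 1) f = 0 := by
      refine (yoneda_d_apply T m Y (j + 1) (j + 1 + 1) f).trans ?_
      rw [cut_d' T m (j + 1 + 1) (j + 1) rfl]
      exact hf
    obtain ⟨g, hg⟩ := h f hf'
    refine ⟨g, ?_⟩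
    have hg' : ((cut T m).linearYonedaObj ℤ Y).d j (j + 1) g = f := hg
    replace hg' := (yoneda_d_apply T m Y j (j + 1) g).symm.trans hg'
    rw [cut_d' T m (j + 1) j rfl] at hg'
    exact hg'
  · intro h f hf
    have hf' : T.d (m - 1 - ((j + 1 + 1 : ℕ) : ℤ)) (m - 1 - ((j + 1 : ℕ) : ℤ)) ≫ f = 0 := by
      have hf2 : ((cut T m).linearYonedaObj ℤ Y).d (j + 1) (j + 1 + 1) f = 0 := hf
      replace hf2 := (yoneda_d_apply T m Y (j + 1) (j + 1 + 1) f).symm.trans hf2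
      rw [cut_d' T m (j + 1 + 1) (j + 1) rfl] at hf2
      exact hf2
    obtain ⟨g, hg⟩ := h f hf'
    refine ⟨g, ?_⟩
    show ((cut T m).linearYonedaObj ℤ Y).d j (j + 1) g = f
    refine (yoneda_d_apply T m Y j (j + 1) g).trans ?_
    rw [cut_d' T m (j + 1) j rfl]
    exact hg

end AuxPropR
namespace AuxPropR

open scoped TensorProduct

variable {A : Type u} [CommRing A]

/-- The dual module, as an object of `ModuleCat`. -/
noncomputable def dualX (M : ModuleCat.{u} A) : ModuleCat.{u} A :=
  ModuleCat.of A (M →ₗ[A] A)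

/-- The dual of a morphism. -/
noncomputable def dualMap {M N : ModuleCat.{u} A} (f : M ⟶ N) : dualX N ⟶ dualX M :=
  ModuleCat.ofHom (LinearMap.lcomp A A f.hom)

lemma dualMap_apply {M N : ModuleCat.{u} A} (f : M ⟶ N) (g : dualX N) :
    dualMap f g = (g : N →ₗ[A] A) ∘ₗ (f.hom : M →ₗ[A] N) := rfl

lemma exists_split (M : ModuleCat.{u} A) [Module.Finite A M] (hM : Projective M) :
    ∃ (n : ℕ) (f : (Fin n → A) →ₗ[A] M) (s : M →ₗ[A] (Fin n → A)),
      f ∘ₗ s = LinearMap.id := by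
  obtain ⟨n, f, hf⟩ := Module.Finite.exists_fin' A M
  have hproj : Module.Projective A M := by
    rw [IsProjective.iff_projective.{u, u}]
    exact hM
  obtain ⟨s, hs⟩ := Module.projective_lifting_property f LinearMap.id hf
  exact ⟨n, f, s, hs⟩

lemma dual_finite (M : ModuleCat.{u} A) [Module.Finite A M] (hM : Projective M) :
    Module.Finite A (M →ₗ[A] A) := by
  obtain ⟨n, f, s, hfs⟩ := exists_split M hM
  haveI : Module.Finite A ((Fin n → A) →ₗ[A] A) := Module.Finite.linearMap A A _ A
  apply Module.Finite.of_surjective (LinearMap.lcomp A A s :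
    ((Fin n → A) →ₗ[A] A) →ₗ[A] (M →ₗ[A] A))
  intro φ
  refine ⟨φ ∘ₗ f, ?_⟩
  show (φ ∘ₗ f) ∘ₗ s = φ
  rw [LinearMap.comp_assoc, hfs, LinearMap.comp_id]

lemma dual_projective (M : ModuleCat.{u} A) [Module.Finite A M] (hM : Projective M) :
    Projective (dualX M) := by
  obtain ⟨n, f, s, hfs⟩ := exists_split M hM
  haveI : Module.Free A ((Fin n → A) →ₗ[A] A) := Module.Free.linearMap A A _ A
  have hproj : Module.Projective A (M →ₗ[A] A) := by
    apply Module.Projective.of_split (LinearMap.lcomp A A f) (LinearMap.lcomp A A s)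
    apply LinearMap.ext
    intro φ
    show (φ ∘ₗ f) ∘ₗ s = φ
    rw [LinearMap.comp_assoc, hfs, LinearMap.comp_id]
  exact (IsProjective.iff_projective.{u, u} (M →ₗ[A] A)).mp hproj

/-- The canonical map `P ⊗ N → Hom(P^*, N)`. -/
noncomputable def tau (P N : ModuleCat.{u} A) :
    ((P : Type u) ⊗[A] (N : Type u)) →ₗ[A] ((P →ₗ[A] A) →ₗ[A] N) :=
  (dualTensorHom A (Module.Dual A P) N) ∘ₗ
    (TensorProduct.map (Module.Dual.eval A P) LinearMap.id)

lemma tau_apply (P N : ModuleCat.{u} A) (x : P) (y : N) (f : P →ₗ[A] A) :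
    tau P N (x ⊗ₜ[A] y) f = f x • y := by
  simp [tau, dualTensorHom_apply, Module.Dual.eval_apply]

lemma tau_natural {P Q : ModuleCat.{u} A} (N : ModuleCat.{u} A) (φ : P →ₗ[A] Q)
    (x : (P : Type u) ⊗[A] (N : Type u)) (g : Q →ₗ[A] A) :
    tau Q N (TensorProduct.map φ LinearMap.id x) g = tau P N x (g ∘ₗ φ) := by
  induction x with
  | zero => simp
  | tmul p n => simp [tau_apply]
  | add a b ha hb => simp [map_add, ha, hb]

lemma tau_bijective_free (n : ℕ) (N : ModuleCat.{u} A) :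
    Function.Bijective (tau (ModuleCat.of A (Fin n → A)) N) := by
  classical
  set P := ModuleCat.of A (Fin n → A)
  let e : Fin n → (Fin n → A) := fun i => fun j => if i = j then 1 else 0
  let σ : ((P →ₗ[A] A) →ₗ[A] N) →ₗ[A] ((P : Type u) ⊗[A] (N : Type u)) :=
    { toFun := fun g => ∑ i : Fin n, e i ⊗ₜ[A] g (LinearMap.proj i)
      map_add' := fun g h => by
        simp [TensorProduct.tmul_add, Finset.sum_add_distrib]
      map_smul' := fun c g => by
        simp [TensorProduct.tmul_smul, Finset.smul_sum] }
  have hστ : ∀ x, σ (tau P N x) = x := by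
    intro x
    induction x with
    | zero => simp
    | tmul p q =>
      show ∑ i : Fin n, e i ⊗ₜ[A] (tau P N (p ⊗ₜ[A] q) (LinearMap.proj i)) = p ⊗ₜ[A] q
      have : ∀ i : Fin n, tau P N (p ⊗ₜ[A] q) (LinearMap.proj i) = p i • q := by
        intro i; rw [tau_apply]; rfl
      have h0 : ∑ i : Fin n, e i ⊗ₜ[A] ((tau P N) (p ⊗ₜ[A] q)) (LinearMap.proj i)
          = ∑ i : Fin n, e i ⊗ₜ[A] (p i • q) :=
        Finset.sum_congr rfl (fun i _ => by rw [this i])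
      rw [h0]
      calc ∑ i : Fin n, e i ⊗ₜ[A] (p i • q)
          = ∑ i : Fin n, (p i • e i) ⊗ₜ[A] q := by
            refine Finset.sum_congr rfl (fun i _ => ?_)
            rw [TensorProduct.tmul_smul, TensorProduct.smul_tmul']
        _ = (∑ i : Fin n, p i • e i) ⊗ₜ[A] q := by
            rw [TensorProduct.sum_tmul]
        _ = p ⊗ₜ[A] q := by
            congr 1
            exact (pi_eq_sum_univ p).symm
    | add a b ha hb => rw [map_add, map_add, ha, hb]
  have key : ∀ f : P →ₗ[A] A,
      (∑ i : Fin n, f (e i) • (LinearMap.proj i : (Fin n → A) →ₗ[A] A)) = f := by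
    intro f
    apply LinearMap.ext
    intro x
    rw [LinearMap.sum_apply, LinearMap.pi_apply_eq_sum_univ f x]
    refine Finset.sum_congr rfl (fun i _ => ?_)
    rw [LinearMap.smul_apply, LinearMap.proj_apply, smul_eq_mul, smul_eq_mul, mul_comm]
  have hτσ : ∀ g, tau P N (σ g) = g := by
    intro g
    apply LinearMap.ext
    intro f
    have h1 : tau P N (σ g) f = ∑ i : Fin n, f (e i) • g (LinearMap.proj i) := by
      show tau P N (∑ i : Fin n, e i ⊗ₜ[A] g (LinearMap.proj i)) f = _
      rw [map_sum, LinearMap.sum_apply]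
      refine Finset.sum_congr rfl (fun i _ => ?_)
      rw [tau_apply]
    rw [h1]
    have h2 : ∑ i : Fin n, f (e i) • g (LinearMap.proj i)
        = g (∑ i : Fin n, f (e i) • (LinearMap.proj i : (Fin n → A) →ₗ[A] A)) := by
      rw [map_sum]
      refine Finset.sum_congr rfl (fun i _ => ?_)
      rw [map_smul]
    rw [h2, key f]
  exact ⟨Function.LeftInverse.injective hστ, Function.RightInverse.surjective hτσ⟩

end AuxPropR
namespace AuxPropR

open scoped TensorProduct

variable {A : Type u} [CommRing A]

lemma tau_bijective (P : ModuleCat.{u} A) [Module.Finite A P] (hP : Projective P)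
    (N : ModuleCat.{u} A) : Function.Bijective (tau P N) := by
  obtain ⟨n, r, s, hrs⟩ := exists_split P hP
  have hfree := tau_bijective_free n N
  have hsr : ∀ x : (P : Type u) ⊗[A] (N : Type u),
      TensorProduct.map r LinearMap.id (TensorProduct.map s LinearMap.id x) = x := by
    intro x
    have h : TensorProduct.map r LinearMap.id ∘ₗ TensorProduct.map s LinearMap.id
        = (LinearMap.id : (P : Type u) ⊗[A] (N : Type u) →ₗ[A] _) := by
      rw [← TensorProduct.map_comp, hrs, LinearMap.id_comp, TensorProduct.map_id]
    exact congrArg (fun φ => φ x) (congrArg DFunLike.coe h)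
  constructor
  · intro x y hxy
    have h2 : TensorProduct.map s LinearMap.id x = TensorProduct.map s LinearMap.id y := by
      apply hfree.injective
      apply LinearMap.ext
      intro g
      have e1 := tau_natural (P := P) (Q := ModuleCat.of A (Fin n → A)) N s x g
      have e2 := tau_natural (P := P) (Q := ModuleCat.of A (Fin n → A)) N s y g
      exact e1.trans (((congrArg (fun φ => φ (g ∘ₗ s))
        (congrArg DFunLike.coe hxy)) : _ = _).trans e2.symm)
    have := congrArg (TensorProduct.map r LinearMap.id) h2
    rwa [hsr, hsr] at this
  · intro h
    obtain ⟨y, hy⟩ := hfree.surjective (h ∘ₗ (LinearMap.lcomp A A s))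
    refine ⟨TensorProduct.map r LinearMap.id y, ?_⟩
    apply LinearMap.ext
    intro f
    have e3 := tau_natural (P := ModuleCat.of A (Fin n → A)) (Q := P) N r y f
    refine e3.trans ?_
    have e4 : tau (ModuleCat.of A (Fin n → A)) N y (f ∘ₗ r)
        = (h ∘ₗ (LinearMap.lcomp A A s)) (f ∘ₗ r) :=
      congrArg (fun φ => φ (f ∘ₗ r)) (congrArg DFunLike.coe hy)
    refine e4.trans ?_
    show h ((f ∘ₗ r) ∘ₗ s) = h f
    rw [LinearMap.comp_assoc, hrs, LinearMap.comp_id]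

/-- The `A`-linear dual of a cochain complex, again as a cochain complex (with
`(dualCx L)^p = (L^{-p})^*`). -/
noncomputable def dualCx (L : CochainComplex (ModuleCat.{u} A) ℤ) :
    CochainComplex (ModuleCat.{u} A) ℤ where
  X p := dualX (L.X (-p))
  d p q := dualMap (L.d (-q) (-p))
  shape p q h := by
    have h' : L.d (-q) (-p) = 0 := L.shape _ _ (by
      simp only [ComplexShape.up_Rel] at h ⊢
      omega)
    show dualMap (L.d (-q) (-p)) = 0
    rw [h']
    apply ModuleCat.hom_ext
    apply LinearMap.ext; intro g
    exact LinearMap.comp_zero (g : (L.X (-p) : Type u) →ₗ[A] A)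
  d_comp_d' i j k _ _ := by
    show dualMap (L.d (-j) (-i)) ≫ dualMap (L.d (-k) (-j)) = 0
    have e : dualMap (L.d (-j) (-i)) ≫ dualMap (L.d (-k) (-j))
        = dualMap (L.d (-k) (-j) ≫ L.d (-j) (-i)) := rfl
    rw [e, L.d_comp_d]
    apply ModuleCat.hom_ext
    apply LinearMap.ext; intro g
    exact LinearMap.comp_zero (g : ((L.X (-i) : ModuleCat A) : Type u) →ₗ[A] A)

lemma dualCx_projective (L : CochainComplex (ModuleCat.{u} A) ℤ)
    [hfin : ∀ n : ℤ, Module.Finite A (L.X n)] (hP : ∀ n : ℤ, Projective (L.X n)) (p : ℤ) :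
    Projective ((dualCx L).X p) :=
  dual_projective (L.X (-p)) (hP (-p))

lemma dualCx_finite (L : CochainComplex (ModuleCat.{u} A) ℤ)
    [hfin : ∀ n : ℤ, Module.Finite A (L.X n)] (hP : ∀ n : ℤ, Projective (L.X n)) (p : ℤ) :
    Module.Finite A ((dualCx L).X p) :=
  dual_finite (L.X (-p)) (hP (-p))

lemma dualCx_exactAt (L : CochainComplex (ModuleCat.{u} A) ℤ) (p : ℤ)
    (h : HomExactAt L (ModuleCat.of A A) (-(p + 1)) (-p) (-(p - 1))) :
    (dualCx L).ExactAt p := by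
  rw [exactAt_iff_concrete' (dualCx L) (p - 1) p (p + 1) (by ring) rfl]
  intro x hx
  obtain ⟨g, hg⟩ := h (ModuleCat.ofHom x) (ModuleCat.hom_ext hx)
  exact ⟨g.hom, congrArg ModuleCat.Hom.hom hg⟩

/-- The key duality: exactness of `Hom(L^*, N)` at `p` is exactness of `L ⊗ N` at `-p`. -/
lemma homExactAt_dualCx_iff (L : CochainComplex (ModuleCat.{u} A) ℤ)
    [hfin : ∀ n : ℤ, Module.Finite A (L.X n)] (hP : ∀ n : ℤ, Projective (L.X n))
    (N : ModuleCat.{u} A) (p : ℤ) :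
    HomExactAt (dualCx L) N (p - 1) p (p + 1) ↔
      (((tensorRight N).mapHomologicalComplex (ComplexShape.up ℤ)).obj L).ExactAt (-p) := by
  set W := ((tensorRight N).mapHomologicalComplex (ComplexShape.up ℤ)).obj L with hW
  haveI : Module.Finite A (L.X (-p)) := hfin _
  haveI : Module.Finite A (L.X (-(p - 1))) := hfin _
  haveI : Module.Finite A (L.X (-(p + 1))) := hfin _
  have τ1 := tau_bijective (L.X (-p)) (hP _) N
  have τ2 := tau_bijective (L.X (-(p - 1))) (hP _) N
  have τ3 := tau_bijective (L.X (-(p + 1))) (hP _) N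
  rw [exactAt_iff_concrete' W (-(p + 1)) (-p) (-(p - 1)) (by ring) (by ring)]
  -- naturality in the two relevant squares
  have nat1 : ∀ (x : (L.X (-p) : Type u) ⊗[A] (N : Type u)) (g : dualX (L.X (-(p - 1)))),
      ((dualCx L).d (p - 1) p ≫ ModuleCat.ofHom (tau (L.X (-p)) N x)) g
        = tau (L.X (-(p - 1))) N (TensorProduct.map (L.d (-p) (-(p - 1))).hom LinearMap.id x) g := by
    intro x g
    exact (tau_natural N (L.d (-p) (-(p - 1))).hom x g).symm
  have nat2 : ∀ (y : (L.X (-(p + 1)) : Type u) ⊗[A] (N : Type u)) (h : dualX (L.X (-p))),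
      ((dualCx L).d p (p + 1) ≫ ModuleCat.ofHom (tau (L.X (-(p + 1))) N y)) h
        = tau (L.X (-p)) N (TensorProduct.map (L.d (-(p + 1)) (-p)).hom LinearMap.id y) h := by
    intro y h
    exact (tau_natural N (L.d (-(p + 1)) (-p)).hom y h).symm
  constructor
  · -- HomExact → tensor exact
    intro hHE x hx
    have hcond : (dualCx L).d (p - 1) p ≫ ModuleCat.ofHom (tau (L.X (-p)) N x) = 0 := by
      apply ModuleCat.hom_ext
      apply LinearMap.ext
      intro g
      refine (nat1 x g).trans ?_
      have hx' : TensorProduct.map (L.d (-p) (-(p - 1))).hom LinearMap.id x = 0 := hx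
      rw [hx', map_zero]
      rfl
    obtain ⟨g, hg⟩ := hHE (ModuleCat.ofHom (tau (L.X (-p)) N x)) hcond
    obtain ⟨y, hy0⟩ := τ3.surjective g.hom
    obtain rfl : ModuleCat.ofHom (tau (L.X (-(p + 1))) N y) = g := by rw [hy0]; rfl
    refine ⟨y, ?_⟩
    apply τ1.injective
    apply LinearMap.ext
    intro h
    have hgx : ((dualCx L).d p (p + 1) ≫ ModuleCat.ofHom (tau (L.X (-(p + 1))) N y)) h
        = tau (L.X (-p)) N x h := by rw [hg]; rfl
    exact (nat2 y h).symm.trans hgx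

  · -- tensor exact → HomExact
    intro hTE f hf
    obtain ⟨x, hx0⟩ := τ1.surjective f.hom
    obtain rfl : ModuleCat.ofHom (tau (L.X (-p)) N x) = f := by rw [hx0]; rfl
    have hx : TensorProduct.map (L.d (-p) (-(p - 1))).hom LinearMap.id x = 0 := by
      apply τ2.injective
      apply LinearMap.ext
      intro g
      refine (nat1 x g).symm.trans ?_
      have h2 : ((dualCx L).d (p - 1) p ≫ ModuleCat.ofHom (tau (L.X (-p)) N x)) g = 0 := by
        rw [hf]; rfl
      have h3 : tau (L.X (-(p - 1))) N 0 g = 0 := by rw [map_zero]; rfl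
      exact h2.trans h3.symm
    obtain ⟨y, hy⟩ := hTE x hx
    refine ⟨ModuleCat.ofHom (tau (L.X (-(p + 1))) N y), ?_⟩
    apply ModuleCat.hom_ext
    apply LinearMap.ext
    intro h
    refine (nat2 y h).trans ?_
    have hy' : TensorProduct.map (L.d (-(p + 1)) (-p)).hom LinearMap.id y = x := hy
    rw [hy']
    rfl

end AuxPropR
namespace AuxPropR

variable {A : Type u} [CommRing A]

lemma cocyc_finite (T : CochainComplex (ModuleCat.{u} A) ℤ) (hT : ∀ n : ℤ, T.ExactAt n)
    (hfin : ∀ n : ℤ, Module.Finite A (T.X n)) (m : ℤ) :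
    Module.Finite A (cocyc T m) := by
  have hker : LinearMap.ker ((T.d m (m + 1)).hom : (T.X m : Type u) →ₗ[A] T.X (m + 1))
      = LinearMap.range ((T.d (m - 1) m).hom : (T.X (m - 1) : Type u) →ₗ[A] T.X m) := by
    apply le_antisymm
    · intro x hx
      obtain ⟨y, hy⟩ := (exactAt_iff_concrete' T (m - 1) m (m + 1) (by ring) rfl).mp
        (hT m) x hx
      exact ⟨y, hy⟩
    · rintro x ⟨y, rfl⟩
      have h : (T.d m (m + 1)) ((T.d (m - 1) m) y) = 0 := by
        have h0 : (T.d (m - 1) m ≫ T.d m (m + 1)) y = 0 := by rw [T.d_comp_d]; rfl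
        exact h0
      exact LinearMap.mem_ker.mpr h
  show Module.Finite A ↥(LinearMap.ker ((T.d m (m + 1)).hom : (T.X m : Type u) →ₗ[A] T.X (m + 1)))
  rw [hker, Module.Finite.iff_fg]
  haveI := hfin (m - 1)
  rw [LinearMap.range_eq_map]
  exact Submodule.FG.map _ (Module.finite_def.mp (hfin (m - 1)))

end AuxPropR

open AuxPropR in
theorem hasPropertyR_of_hasABProperty' {A : Type u} [CommRing A]
    (hid : ∃ d : ℕ, ∀ (X : ModuleCat.{u} A) (i : ℕ), d < i →
      Subsingleton (((Ext ℤ (ModuleCat.{u} A) i).obj (Opposite.op X)).obj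
        (ModuleCat.of A A)))
    (hAB : ∃ c : ℕ, 1 ≤ c ∧ ∀ M N : ModuleCat.{u} A, Module.Finite A M → Module.Finite A N →
    (∃ i₀ : ℕ, ∀ i : ℕ, i₀ ≤ i →
      Subsingleton (((Ext ℤ (ModuleCat.{u} A) i).obj (Opposite.op M)).obj N)) →
    ∀ i : ℕ, c ≤ i →
      Subsingleton (((Ext ℤ (ModuleCat.{u} A) i).obj (Opposite.op M)).obj N))
    (N : ModuleCat.{u} A) (hN : Module.Finite A N) :
    ∀ L : CochainComplex (ModuleCat.{u} A) ℤ,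
    (∀ n : ℤ, Module.Finite A (L.X n)) →
    (∀ n : ℤ, Projective (L.X n)) →
    (∀ n : ℤ, L.ExactAt n) →
    (∃ n₀ : ℤ, ∀ n : ℤ, n₀ ≤ n →
      (((tensorRight N).mapHomologicalComplex (ComplexShape.up ℤ)).obj L).ExactAt n) →
    ∀ n : ℤ, (((tensorRight N).mapHomologicalComplex (ComplexShape.up ℤ)).obj L).ExactAt n := by
  obtain ⟨d, hd⟩ := hid
  obtain ⟨c, hc1, hAB'⟩ := hAB
  intro L hfinL hprojL hexL hev n
  obtain ⟨n₀, hn₀⟩ := hev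
  haveI hfinL' : ∀ n : ℤ, Module.Finite A (L.X n) := hfinL
  -- Step A : `Hom(L, A)` is "exact" everywhere
  have hLhom : ∀ q : ℤ, HomExactAt L (ModuleCat.of A A) (-(q + 1)) (-q) (-(q - 1)) := by
    intro q
    have h := (subsingleton_ext_iff L (-q + d + 2) hexL hprojL (ModuleCat.of A A) d).mp
      (hd (cocyc L (-q + d + 2)) (d + 1) (by omega))
    exact (homExactAt_congr L (ModuleCat.of A A)
      (by push_cast; omega) (by push_cast; omega) (by push_cast; omega)).mp h
  -- Step B : the dual complex is exact with f.g. projective components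
  have hTex : ∀ p : ℤ, (dualCx L).ExactAt p := fun p => dualCx_exactAt L p (hLhom p)
  have hTproj : ∀ p : ℤ, Projective ((dualCx L).X p) := dualCx_projective L hprojL
  have hTfin : ∀ p : ℤ, Module.Finite A ((dualCx L).X p) := dualCx_finite L hprojL
  -- Step C : the key equivalence
  have key : ∀ (m : ℤ) (j : ℕ),
      Subsingleton (((Ext ℤ (ModuleCat.{u} A) (j + 1)).obj
        (Opposite.op (cocyc (dualCx L) m))).obj N) ↔
      (((tensorRight N).mapHomologicalComplex (ComplexShape.up ℤ)).obj L).ExactAt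
        ((j : ℤ) + 2 - m) := by
    intro m j
    rw [subsingleton_ext_iff (dualCx L) m hTex hTproj N j,
      homExactAt_congr (dualCx L) N
        (show m - 1 - ((j + 1 + 1 : ℕ) : ℤ) = (m - 2 - (j : ℤ)) - 1 by push_cast; omega)
        (show m - 1 - ((j + 1 : ℕ) : ℤ) = m - 2 - (j : ℤ) by push_cast; omega)
        (show m - 1 - ((j : ℕ) : ℤ) = (m - 2 - (j : ℤ)) + 1 by push_cast; omega),
      homExactAt_dualCx_iff L hprojL N (m - 2 - (j : ℤ)),
      show -(m - 2 - (j : ℤ)) = (j : ℤ) + 2 - m by ring]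
  -- Step D : conclude
  obtain ⟨j, rfl⟩ : ∃ j, c = j + 1 := ⟨c - 1, by omega⟩
  set m : ℤ := (j : ℤ) + 2 - n with hm
  have hfinM : Module.Finite A (cocyc (dualCx L) m) :=
    cocyc_finite (dualCx L) hTex hTfin m
  have hevM : ∃ i₀ : ℕ, ∀ i : ℕ, i₀ ≤ i →
      Subsingleton (((Ext ℤ (ModuleCat.{u} A) i).obj
        (Opposite.op (cocyc (dualCx L) m))).obj N) := by
    refine ⟨(n₀ + m - 1).toNat + 1, ?_⟩
    intro i hi
    obtain ⟨j', rfl⟩ : ∃ j', i = j' + 1 := ⟨i - 1, by omega⟩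
    rw [key m j']
    apply hn₀
    omega
  have hsub := hAB' (cocyc (dualCx L) m) N hfinM hN hevM (j + 1) (le_refl _)
  have hfin := (key m j).mp hsub
  have hidx : (j : ℤ) + 2 - m = n := by rw [hm]; ring
  rwa [hidx] at hfin


/-- If `A` is a commutative ring with `id_A(A) < ∞` which has the AB property, then every
finitely generated `A`-module `N` has property (R). -/
theorem hasPropertyR_of_hasABProperty {A : Type u} [CommRing A]
    (hid : ∃ d : ℕ, ∀ (X : ModuleCat.{u} A) (i : ℕ), d < i →
      Subsingleton (((Ext ℤ (ModuleCat.{u} A) i).obj (Opposite.op X)).obj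
        (ModuleCat.of A A)))
    (hAB : HasABProperty A)
    (N : ModuleCat.{u} A) (hN : Module.Finite A N) : HasPropertyR N :=
  hasPropertyR_of_hasABProperty' hid hAB N hN
end

section
/- Let k be a field and let A be a finite-dimensional k-algebra which is self-injective, i.e., A is injective as a left module over itself. If A has finite representation type, i.e., there are only finitely many isomorphism classes of indecomposable finitely generated left A-modules, then A has the left AB property. -/
open CategoryTheory CategoryTheory.Limits CategoryTheory.Abelian

universe u

/-- A ring `A` has the *left AB property* if there is `c ≥ 1` such that for all finitely
generated left `A`-modules `M`, `N`: if `Ext^i(M,N) = 0` for `i ≫ 0` then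
`Ext^i(M,N) = 0` for all `i ≥ c`. -/
def HasLeftABProperty (A : Type u) [Ring A] : Prop :=
  ∃ c : ℕ, 1 ≤ c ∧ ∀ M N : ModuleCat.{u} A, Module.Finite A M → Module.Finite A N →
    (∃ i₀ : ℕ, ∀ i : ℕ, i₀ ≤ i →
      Subsingleton (((Ext ℤ (ModuleCat.{u} A) i).obj (Opposite.op M)).obj N)) →
    ∀ i : ℕ, c ≤ i →
      Subsingleton (((Ext ℤ (ModuleCat.{u} A) i).obj (Opposite.op M)).obj N)

/-- A module is *indecomposable* if it is nonzero and in any decomposition as a direct sum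
of two modules, one of the summands is zero. -/
def IndecomposableModuleCat {A : Type u} [Ring A] (N : ModuleCat.{u} A) : Prop :=
  ¬ Limits.IsZero N ∧
    ∀ X Y : ModuleCat.{u} A, Nonempty (N ≅ X ⊞ Y) → Limits.IsZero X ∨ Limits.IsZero Y

/-! ### Auxiliary lemmas -/

section DerivedAdditivity

variable {C : Type*} [Category C] {D : Type*} [Category D] [Abelian C]
  [HasProjectiveResolutions C] [Abelian D]

lemma AB_leftDerived_map_add (F : C ⥤ D) [F.Additive] (n : ℕ) {X Y : C} (f g : X ⟶ Y) :
    (F.leftDerived n).map (f + g) = (F.leftDerived n).map f + (F.leftDerived n).map g := by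
  have P : ProjectiveResolution X := (HasProjectiveResolutions.out X).out.some
  have Q : ProjectiveResolution Y := (HasProjectiveResolutions.out Y).out.some
  have hf := ProjectiveResolution.lift_commutes f P Q
  have hg := ProjectiveResolution.lift_commutes g P Q
  rw [F.leftDerived_map_eq n f (ProjectiveResolution.lift f P Q) hf,
      F.leftDerived_map_eq n g (ProjectiveResolution.lift g P Q) hg,
      F.leftDerived_map_eq n (f + g)
        (ProjectiveResolution.lift f P Q + ProjectiveResolution.lift g P Q)
        (by rw [Preadditive.add_comp, hf, hg, Functor.map_add, Preadditive.comp_add]),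
      Functor.map_add, Preadditive.add_comp, Preadditive.comp_add]

lemma AB_natTrans_leftDerived_add {F G : C ⥤ D} [F.Additive] [G.Additive]
    (α β : F ⟶ G) (n : ℕ) :
    NatTrans.leftDerived (α + β) n = NatTrans.leftDerived α n + NatTrans.leftDerived β n := by
  ext X
  have P : ProjectiveResolution X := (HasProjectiveResolutions.out X).out.some
  rw [NatTrans.app_add, ProjectiveResolution.leftDerived_app_eq (α + β) P n,
      ProjectiveResolution.leftDerived_app_eq α P n, ProjectiveResolution.leftDerived_app_eq β P n]
  have : (NatTrans.mapHomologicalComplex (α + β) (ComplexShape.down ℕ)).app P.complex =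
      (NatTrans.mapHomologicalComplex α (ComplexShape.down ℕ)).app P.complex +
      (NatTrans.mapHomologicalComplex β (ComplexShape.down ℕ)).app P.complex := by
    ext i
    simp [NatTrans.mapHomologicalComplex]
    rfl
  rw [this, Functor.map_add, Preadditive.add_comp, Preadditive.comp_add]

end DerivedAdditivity

section ExtAdditivity

variable {A : Type u} [Ring A]

lemma AB_ext_map_add_fst (n : ℕ) {M M' : ModuleCat.{u} A} (N : ModuleCat.{u} A)
    (f g : M ⟶ M') :
    ((Ext ℤ (ModuleCat.{u} A) n).map (f + g).op).app N =
      ((Ext ℤ (ModuleCat.{u} A) n).map f.op).app N +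
      ((Ext ℤ (ModuleCat.{u} A) n).map g.op).app N := by
  show ((((linearYoneda ℤ (ModuleCat.{u} A)).obj N).rightOp.leftDerived n).leftOp).map
      (f + g).op = _
  have : (f + g).op = f.op + g.op := rfl
  rw [this]
  show ((((linearYoneda ℤ (ModuleCat.{u} A)).obj N).rightOp.leftDerived n).map (f + g)).unop = _
  rw [AB_leftDerived_map_add]
  rfl

lemma AB_ext_map_add_snd (n : ℕ) (M : ModuleCat.{u} A) {N N' : ModuleCat.{u} A}
    (f g : N ⟶ N') :
    ((Ext ℤ (ModuleCat.{u} A) n).obj (Opposite.op M)).map (f + g) =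
      ((Ext ℤ (ModuleCat.{u} A) n).obj (Opposite.op M)).map f +
      ((Ext ℤ (ModuleCat.{u} A) n).obj (Opposite.op M)).map g := by
  show (NatTrans.leftDerived
      (NatTrans.rightOp ((linearYoneda ℤ (ModuleCat.{u} A)).map (f + g))) n).leftOp.app
      (Opposite.op M) = _
  have h1 : NatTrans.rightOp ((linearYoneda ℤ (ModuleCat.{u} A)).map (f + g)) =
      NatTrans.rightOp ((linearYoneda ℤ (ModuleCat.{u} A)).map f) +
      NatTrans.rightOp ((linearYoneda ℤ (ModuleCat.{u} A)).map g) := by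
    ext X : 2
    apply Quiver.Hom.unop_inj
    ext φ
    simp [linearYoneda]
    rfl
  rw [h1, AB_natTrans_leftDerived_add]
  rfl

end ExtAdditivity

section SubsingletonTransfer

universe v

lemma AB_subsingleton_of_splitting {R : Type*} [Ring R] {P Q : ModuleCat.{v} R}
    (a : P ⟶ Q) (b : Q ⟶ P) (h : a ≫ b = 𝟙 P) (hQ : Subsingleton Q) : Subsingleton P := by
  constructor
  intro x y
  have hx : b (a x) = x := ConcreteCategory.congr_hom h x
  have hy : b (a y) = y := ConcreteCategory.congr_hom h y
  rw [← hx, ← hy, Subsingleton.elim (a x) (a y)]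

lemma AB_subsingleton_of_id_eq_zero {R : Type*} [Ring R] {P : ModuleCat.{v} R}
    (h : 𝟙 P = 0) : Subsingleton P := by
  constructor
  intro x y
  have hx : (𝟙 P : P ⟶ P) x = (0 : P ⟶ P) x := ConcreteCategory.congr_hom h x
  have hy : (𝟙 P : P ⟶ P) y = (0 : P ⟶ P) y := ConcreteCategory.congr_hom h y
  have h0 : ((0 : P ⟶ P) x : ↑P) = (0 : P ⟶ P) y := by
    show (0 : ↑P →ₗ[R] ↑P) x = (0 : ↑P →ₗ[R] ↑P) y
    simp
  have := hx.trans (h0.trans hy.symm)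
  simpa using this

lemma AB_subsingleton_of_isZero {R : Type*} [Ring R] {P : ModuleCat.{v} R}
    (h : Limits.IsZero P) : Subsingleton P :=
  AB_subsingleton_of_id_eq_zero (h.eq_of_src (𝟙 P) 0)

lemma AB_comp_eq_zero_of_subsingleton {R : Type*} [Ring R] {P Q S : ModuleCat.{v} R}
    (a : P ⟶ Q) (b : Q ⟶ S) (hQ : Subsingleton Q) : a ≫ b = 0 := by
  ext x
  show b (a x) = 0
  rw [Subsingleton.elim (a x) 0, map_zero]

end SubsingletonTransfer

section Decomp

variable (k : Type u) (A : Type u) [Field k] [Ring A] [Algebra k A] [FiniteDimensional k A]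

/-- The dimension over `k` of an `A`-module. -/
noncomputable def ABkdim (N : ModuleCat.{u} A) : ℕ :=
  @Module.finrank k N _ _ (Module.compHom N (algebraMap k A))

lemma AB_finiteDimensional (N : ModuleCat.{u} A) [hN : Module.Finite A N] :
    letI : Module k N := Module.compHom N (algebraMap k A)
    Module.Finite k N := by
  letI : Module k N := Module.compHom N (algebraMap k A)
  haveI : IsScalarTower k A N := by
    constructor
    intro x a n
    show ((x • a) • n : N) = algebraMap k A x • (a • n)
    rw [Algebra.smul_def, mul_smul]
  exact Module.Finite.trans A N

lemma AB_module_finite_of_retract {X N : ModuleCat.{u} A} (hN : Module.Finite A N)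
    (u : X ⟶ N) (v : N ⟶ X) (huv : u ≫ v = 𝟙 X) : Module.Finite A X := by
  have hsurj : Function.Surjective v := by
    intro x
    exact ⟨u x, ConcreteCategory.congr_hom huv x⟩
  exact Module.Finite.of_surjective v.hom hsurj

lemma ABkdim_eq_add_of_biprod {X Y N : ModuleCat.{u} A} (e : N ≅ X ⊞ Y)
    (hX : Module.Finite A X) (hY : Module.Finite A Y) :
    ABkdim k A N = ABkdim k A X + ABkdim k A Y := by
  letI : Module k N := Module.compHom N (algebraMap k A)
  letI : Module k X := Module.compHom X (algebraMap k A)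
  letI : Module k Y := Module.compHom Y (algebraMap k A)
  haveI : Module.Finite k X := AB_finiteDimensional k A X
  haveI : Module.Finite k Y := AB_finiteDimensional k A Y
  have ε : ↑N ≃ₗ[A] (↑X × ↑Y) :=
    e.toLinearEquiv.trans (ModuleCat.biprodIsoProd X Y).toLinearEquiv
  have εk : ↑N ≃ₗ[k] (↑X × ↑Y) := by
    refine ε.toAddEquiv.toLinearEquiv ?_
    intro c x
    show ε ((algebraMap k A c) • x) = _
    rw [LinearEquiv.map_smul]
    rfl
  show Module.finrank k N = Module.finrank k X + Module.finrank k Y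
  rw [εk.finrank_eq, Module.finrank_prod]

lemma ABkdim_pos {X : ModuleCat.{u} A} (hX : Module.Finite A X) (h0 : ¬ IsZero X) :
    0 < ABkdim k A X := by
  letI : Module k X := Module.compHom X (algebraMap k A)
  haveI : Module.Finite k X := AB_finiteDimensional k A X
  haveI : Nontrivial X := by
    rw [← not_subsingleton_iff_nontrivial]
    intro hs
    exact h0 (ModuleCat.isZero_of_subsingleton X)
  exact Module.finrank_pos

include k in
/-- Induction principle for finite modules via indecomposables. -/
theorem AB_module_induction (P : ModuleCat.{u} A → Prop)
    (hiso : ∀ X Y : ModuleCat.{u} A, (X ≅ Y) → P X → P Y)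
    (hzero : ∀ X : ModuleCat.{u} A, IsZero X → P X)
    (hindc : ∀ X : ModuleCat.{u} A, Module.Finite A X → IndecomposableModuleCat X → P X)
    (hsum : ∀ X Y N : ModuleCat.{u} A, (N ≅ X ⊞ Y) → P X → P Y → P N) :
    ∀ N : ModuleCat.{u} A, Module.Finite A N → P N := by
  have H : ∀ n : ℕ, ∀ N : ModuleCat.{u} A, Module.Finite A N → ABkdim k A N ≤ n → P N := by
    intro n
    induction n with
    | zero =>
      intro N hN hd
      by_cases h0 : IsZero N
      · exact hzero N h0
      · have := ABkdim_pos k A hN h0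
        omega
    | succ n ih =>
      intro N hN hd
      by_cases h0 : IsZero N
      · exact hzero N h0
      by_cases hi : IndecomposableModuleCat N
      · exact hindc N hN hi
      · rw [IndecomposableModuleCat] at hi
        push_neg at hi
        obtain ⟨X, Y, ⟨e⟩, hX0, hY0⟩ := hi h0
        have hXfin : Module.Finite A X :=
          AB_module_finite_of_retract A hN (biprod.inl ≫ e.inv) (e.hom ≫ biprod.fst) (by simp)
        have hYfin : Module.Finite A Y :=
          AB_module_finite_of_retract A hN (biprod.inr ≫ e.inv) (e.hom ≫ biprod.snd) (by simp)
        have hadd := ABkdim_eq_add_of_biprod k A e hXfin hYfin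
        have hXd : ABkdim k A X ≤ n := by
          have := ABkdim_pos k A hYfin hY0
          omega
        have hYd : ABkdim k A Y ≤ n := by
          have := ABkdim_pos k A hXfin hX0
          omega
        exact hsum X Y N e (ih X hXfin hXd) (ih Y hYfin hYd)
  exact fun N hN => H (ABkdim k A N) N hN le_rfl

end Decomp

section Main
variable {A : Type u} [Ring A]

/-- Abbreviation for the Ext group. -/
noncomputable abbrev ABExt (i : ℕ) (M N : ModuleCat.{u} A) : ModuleCat ℤ :=
  ((Ext ℤ (ModuleCat.{u} A) i).obj (Opposite.op M)).obj N

lemma AB_retract_snd (i : ℕ) (M : ModuleCat.{u} A) {X N : ModuleCat.{u} A}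
    (u : X ⟶ N) (v : N ⟶ X) (huv : u ≫ v = 𝟙 X)
    (h : Subsingleton (ABExt i M N)) : Subsingleton (ABExt i M X) := by
  set F := (Ext ℤ (ModuleCat.{u} A) i).obj (Opposite.op M)
  exact AB_subsingleton_of_splitting (F.map u) (F.map v)
    (by rw [← F.map_comp, huv, F.map_id]) h

lemma AB_retract_fst (i : ℕ) (N : ModuleCat.{u} A) {X M : ModuleCat.{u} A}
    (u : X ⟶ M) (v : M ⟶ X) (huv : u ≫ v = 𝟙 X)
    (h : Subsingleton (ABExt i M N)) : Subsingleton (ABExt i X N) := by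
  refine AB_subsingleton_of_splitting (((Ext ℤ (ModuleCat.{u} A) i).map v.op).app N)
    (((Ext ℤ (ModuleCat.{u} A) i).map u.op).app N) ?_ h
  rw [← NatTrans.comp_app, ← Functor.map_comp]
  have : v.op ≫ u.op = (𝟙 X).op := by rw [← op_comp, huv]
  rw [this, op_id, CategoryTheory.Functor.map_id, NatTrans.id_app]

lemma AB_zero_fst (i : ℕ) {M : ModuleCat.{u} A} (N : ModuleCat.{u} A) (h : IsZero M) :
    Subsingleton (ABExt i M N) := by
  have h1 : 𝟙 M = (0 : M ⟶ M) := h.eq_of_src _ _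
  have h2 := AB_ext_map_add_fst i N (0 : M ⟶ M) (0 : M ⟶ M)
  rw [add_zero] at h2
  have h3 : ((Ext ℤ (ModuleCat.{u} A) i).map ((0 : M ⟶ M)).op).app N = 0 :=
    left_eq_add.mp h2
  apply AB_subsingleton_of_id_eq_zero
  have h4 : 𝟙 (ABExt i M N) = ((Ext ℤ (ModuleCat.{u} A) i).map (𝟙 M).op).app N := by
    rw [op_id, CategoryTheory.Functor.map_id, NatTrans.id_app]
  rw [h4, h1, h3]

lemma AB_zero_snd (i : ℕ) (M : ModuleCat.{u} A) {N : ModuleCat.{u} A} (h : IsZero N) :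
    Subsingleton (ABExt i M N) := by
  set F := (Ext ℤ (ModuleCat.{u} A) i).obj (Opposite.op M)
  have h1 : 𝟙 N = (0 : N ⟶ N) := h.eq_of_src _ _
  have h2 := AB_ext_map_add_snd i M (0 : N ⟶ N) (0 : N ⟶ N)
  rw [add_zero] at h2
  have h3 : F.map (0 : N ⟶ N) = 0 := left_eq_add.mp h2
  apply AB_subsingleton_of_id_eq_zero
  rw [show 𝟙 (ABExt i M N) = F.map (𝟙 N) from (F.map_id N).symm, h1, h3]

lemma AB_biprod_decomp_id {X Y N : ModuleCat.{u} A} (e : N ≅ X ⊞ Y) :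
    𝟙 N = (e.hom ≫ biprod.fst) ≫ (biprod.inl ≫ e.inv) +
      (e.hom ≫ biprod.snd) ≫ (biprod.inr ≫ e.inv) := by
  have := biprod.total (X := X) (Y := Y)
  calc 𝟙 N = e.hom ≫ (biprod.fst ≫ biprod.inl + biprod.snd ≫ biprod.inr) ≫ e.inv := by
        rw [this]; simp
    _ = _ := by rw [Preadditive.add_comp, Preadditive.comp_add]; simp [Category.assoc]

lemma AB_sum_snd (i : ℕ) (M : ModuleCat.{u} A) {X Y N : ModuleCat.{u} A} (e : N ≅ X ⊞ Y)
    (hX : Subsingleton (ABExt i M X)) (hY : Subsingleton (ABExt i M Y)) :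
    Subsingleton (ABExt i M N) := by
  set F := (Ext ℤ (ModuleCat.{u} A) i).obj (Opposite.op M) with hF
  apply AB_subsingleton_of_id_eq_zero
  have h1 := AB_biprod_decomp_id e
  have : 𝟙 (ABExt i M N) = F.map (𝟙 N) := (F.map_id N).symm
  rw [this, h1, AB_ext_map_add_snd]
  rw [F.map_comp ((e.hom ≫ biprod.fst)) ((biprod.inl ≫ e.inv)),
    F.map_comp ((e.hom ≫ biprod.snd)) ((biprod.inr ≫ e.inv)),
    AB_comp_eq_zero_of_subsingleton _ _ hX, AB_comp_eq_zero_of_subsingleton _ _ hY, add_zero]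

lemma AB_sum_fst (i : ℕ) (N : ModuleCat.{u} A) {X Y M : ModuleCat.{u} A} (e : M ≅ X ⊞ Y)
    (hX : Subsingleton (ABExt i X N)) (hY : Subsingleton (ABExt i Y N)) :
    Subsingleton (ABExt i M N) := by
  apply AB_subsingleton_of_id_eq_zero
  have h1 := AB_biprod_decomp_id e
  have h4 : 𝟙 (ABExt i M N) = ((Ext ℤ (ModuleCat.{u} A) i).map (𝟙 M).op).app N := by
    rw [op_id, CategoryTheory.Functor.map_id, NatTrans.id_app]
  rw [h4, h1, AB_ext_map_add_fst]
  have c1 : ((e.hom ≫ biprod.fst) ≫ (biprod.inl ≫ e.inv)).op =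
      (biprod.inl ≫ e.inv).op ≫ (e.hom ≫ biprod.fst).op := by rw [← op_comp]
  have c2 : ((e.hom ≫ biprod.snd) ≫ (biprod.inr ≫ e.inv)).op =
      (biprod.inr ≫ e.inv).op ≫ (e.hom ≫ biprod.snd).op := by rw [← op_comp]
  rw [c1, c2, CategoryTheory.Functor.map_comp, CategoryTheory.Functor.map_comp,
    NatTrans.comp_app, NatTrans.comp_app,
    AB_comp_eq_zero_of_subsingleton _ _ hX, AB_comp_eq_zero_of_subsingleton _ _ hY, add_zero]

end Main


section Assembly

variable {A : Type u} [Ring A]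

/-- Eventual vanishing of Ext. -/
def ABEvV (M N : ModuleCat.{u} A) : Prop :=
  ∃ i₀ : ℕ, ∀ i : ℕ, i₀ ≤ i → Subsingleton (ABExt i M N)

lemma ABEvV_retract_fst {X M : ModuleCat.{u} A} (N : ModuleCat.{u} A)
    (u : X ⟶ M) (v : M ⟶ X) (huv : u ≫ v = 𝟙 X) (h : ABEvV M N) : ABEvV X N := by
  obtain ⟨i₀, hi₀⟩ := h
  exact ⟨i₀, fun i hi => AB_retract_fst i N u v huv (hi₀ i hi)⟩

lemma ABEvV_retract_snd (M : ModuleCat.{u} A) {X N : ModuleCat.{u} A}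
    (u : X ⟶ N) (v : N ⟶ X) (huv : u ≫ v = 𝟙 X) (h : ABEvV M N) : ABEvV M X := by
  obtain ⟨i₀, hi₀⟩ := h
  exact ⟨i₀, fun i hi => AB_retract_snd i M u v huv (hi₀ i hi)⟩

end Assembly

/-- Let `k` be a field and let `A` be a finite-dimensional `k`-algebra which is
self-injective, i.e. injective as a left module over itself.  If `A` has finite
representation type (only finitely many isomorphism classes of indecomposable finitely
generated left `A`-modules), then `A` has the left AB property. -/
theorem hasLeftABProperty_of_finite_representation_type (k : Type u) (A : Type u)
    [Field k] [Ring A] [Algebra k A] [FiniteDimensional k A]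
    (hself : Module.Injective A A)
    (hrep : ∃ (r : ℕ) (C : Fin r → ModuleCat.{u} A),
      ∀ N : ModuleCat.{u} A, Module.Finite A N → IndecomposableModuleCat N →
        ∃ j : Fin r, Nonempty (N ≅ C j)) :
    HasLeftABProperty A := by
  classical
  obtain ⟨r, C, hC⟩ := hrep
  -- the threshold for each pair of indecomposables
  set d : Fin r × Fin r → ℕ := fun p =>
    if h : ABEvV (C p.1) (C p.2) then h.choose else 0 with hd
  set c : ℕ := Finset.univ.sup d + 1 with hc
  have key : ∀ j j' : Fin r, ABEvV (C j) (C j') → ∀ i : ℕ, c ≤ i →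
      Subsingleton (ABExt i (C j) (C j')) := by
    intro j j' h i hi
    refine h.choose_spec i ?_
    have h1 : d (j, j') = h.choose := by rw [hd]; exact dif_pos h
    have h2 : d (j, j') ≤ Finset.univ.sup d := Finset.le_sup (Finset.mem_univ (j, j'))
    omega
  -- Step 1: for each `j'`, all finite `M` satisfy the property against `C j'`.
  have step1 : ∀ (j' : Fin r) (M : ModuleCat.{u} A), Module.Finite A M →
      ABEvV M (C j') → ∀ i : ℕ, c ≤ i → Subsingleton (ABExt i M (C j')) := by
    intro j'
    refine AB_module_induction k A
      (fun M => ABEvV M (C j') → ∀ i : ℕ, c ≤ i → Subsingleton (ABExt i M (C j'))) ?_ ?_ ?_ ?_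
    · -- iso
      intro X Y e hX hEv i hi
      refine AB_retract_fst i (C j') e.inv e.hom (by simp) ?_
      exact hX (ABEvV_retract_fst (C j') e.hom e.inv (by simp) hEv) i hi
    · -- zero
      intro X h0 _ i _
      exact AB_zero_fst i (C j') h0
    · -- indecomposable
      intro X hfin hind hEv i hi
      obtain ⟨j, ⟨e⟩⟩ := hC X hfin hind
      refine AB_retract_fst i (C j') e.hom e.inv (by simp) ?_
      exact key j j' (ABEvV_retract_fst (C j') e.inv e.hom (by simp) hEv) i hi
    · -- biproduct
      intro X Y M e hX hY hEv i hi
      have hEvX : ABEvV X (C j') :=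
        ABEvV_retract_fst (C j') (biprod.inl ≫ e.inv) (e.hom ≫ biprod.fst) (by simp) hEv
      have hEvY : ABEvV Y (C j') :=
        ABEvV_retract_fst (C j') (biprod.inr ≫ e.inv) (e.hom ≫ biprod.snd) (by simp) hEv
      exact AB_sum_fst i (C j') e (hX hEvX i hi) (hY hEvY i hi)
  -- Step 2: all finite `M`, `N` satisfy the property.
  have step2 : ∀ (M : ModuleCat.{u} A), Module.Finite A M → ∀ (N : ModuleCat.{u} A),
      Module.Finite A N →
      ABEvV M N → ∀ i : ℕ, c ≤ i → Subsingleton (ABExt i M N) := by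
    intro M hM
    refine AB_module_induction k A
      (fun N => ABEvV M N → ∀ i : ℕ, c ≤ i → Subsingleton (ABExt i M N)) ?_ ?_ ?_ ?_
    · -- iso
      intro X Y e hX hEv i hi
      refine AB_retract_snd i M e.inv e.hom (by simp) ?_
      exact hX (ABEvV_retract_snd M e.hom e.inv (by simp) hEv) i hi
    · -- zero
      intro X h0 _ i _
      exact AB_zero_snd i M h0
    · -- indecomposable
      intro X hfin hind hEv i hi
      obtain ⟨j, ⟨e⟩⟩ := hC X hfin hind
      refine AB_retract_snd i M e.hom e.inv (by simp) ?_
      exact step1 j (M) hM (ABEvV_retract_snd M e.inv e.hom (by simp) hEv) i hi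
    · -- biproduct
      intro X Y N e hX hY hEv i hi
      have hEvX : ABEvV M X :=
        ABEvV_retract_snd M (biprod.inl ≫ e.inv) (e.hom ≫ biprod.fst) (by simp) hEv
      have hEvY : ABEvV M Y :=
        ABEvV_retract_snd M (biprod.inr ≫ e.inv) (e.hom ≫ biprod.snd) (by simp) hEv
      exact AB_sum_snd i M e (hX hEvX i hi) (hY hEvY i hi)
  refine ⟨c, by omega, ?_⟩
  intro M N hM hN hEv i hi
  exact step2 M hM N hN hEv i hi
end

section
/- Let A be a commutative ring with id_A(A) < ∞ (i.e., there exists d such that Ext_A^i(X,A) = 0 for every A-module X and every i > d), and let L be an exact cochain complex of finitely generated projective A-modules (indexed by the integers). Then the dual complex Hom_A(L,A) is exact. -/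
open CategoryTheory CategoryTheory.Limits CategoryTheory.Abelian

universe u

section Aux
variable {A : Type u} [CommRing A] (L : CochainComplex (ModuleCat.{u} A) ℤ) (m : ℤ)

noncomputable def resComplex : ChainComplex (ModuleCat.{u} A) ℕ :=
  ChainComplex.of (fun k => L.X (m - 1 - (k : ℤ)))
    (fun k => L.d (m - 1 - ((k+1 : ℕ) : ℤ)) (m - 1 - (k : ℤ)))
    (fun _ => L.d_comp_d _ _ _)

noncomputable def resTarget : ModuleCat.{u} A :=
  ModuleCat.of A (LinearMap.range (L.d (m - 1 - ((0:ℕ) : ℤ)) m).hom)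

noncomputable def resAug : (resComplex L m).X 0 ⟶ resTarget L m :=
  ModuleCat.ofHom (L.d (m - 1 - ((0:ℕ) : ℤ)) m).hom.rangeRestrict

lemma resComplex_d (k : ℕ) : (resComplex L m).d (k+1) k
    = L.d (m - 1 - ((k+1 : ℕ) : ℤ)) (m - 1 - (k : ℤ)) := by
  simp [resComplex]

lemma hexact' (hex : ∀ n : ℤ, L.ExactAt n) (a b c : ℤ) (hab : a + 1 = b) (hbc : b + 1 = c) :
    Function.Exact ⇑(L.d a b) ⇑(L.d b c) := by
  have := (HomologicalComplex.exactAt_iff' L a b c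
    ((ComplexShape.up ℤ).prev_eq' (by simpa using hab))
    ((ComplexShape.up ℤ).next_eq' (by simpa using hbc))).1 (hex b)
  exact (ShortComplex.ShortExact.moduleCat_exact_iff_function_exact _).1 this

lemma resComplex_d_comp_aug : (resComplex L m).d 1 0 ≫ resAug L m = 0 := by
  ext x
  apply Subtype.ext
  simp only [resComplex_d]
  show (L.d (m - 1 - ((1:ℕ):ℤ)) (m - 1 - ((0:ℕ):ℤ)) ≫ L.d (m - 1 - ((0:ℕ):ℤ)) m) x = _
  rw [L.d_comp_d]
  rfl

variable (hex : ∀ n : ℤ, L.ExactAt n)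

noncomputable def resPi : resComplex L m ⟶ (ChainComplex.single₀ _).obj (resTarget L m) :=
  (ChainComplex.toSingle₀Equiv _ _).symm ⟨resAug L m, resComplex_d_comp_aug L m⟩

include hex in
lemma resComplex_exactAt_succ (k : ℕ) : (resComplex L m).ExactAt (k + 1) := by
  rw [HomologicalComplex.exactAt_iff' _ (k+2) (k+1) k (by simp) (by simp)]
  rw [ShortComplex.ShortExact.moduleCat_exact_iff_function_exact]
  show Function.Exact ⇑((resComplex L m).d (k+2) (k+1)) ⇑((resComplex L m).d (k+1) k)
  rw [show ((k:ℕ)+2) = (k+1)+1 from rfl, resComplex_d, resComplex_d]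
  exact hexact' L hex _ _ _ (by push_cast; ring) (by push_cast; ring)

include hex in
lemma resExact0 : (ShortComplex.mk ((resComplex L m).d 1 0) (resAug L m)
    (resComplex_d_comp_aug L m)).Exact := by
  rw [ShortComplex.moduleCat_exact_iff]
  intro x hx
  have hx' : L.d (m - 1 - ((0:ℕ):ℤ)) m x = 0 := congrArg Subtype.val hx
  obtain ⟨y, hy⟩ := (hexact' L hex (m - 1 - ((1:ℕ):ℤ)) (m - 1 - ((0:ℕ):ℤ)) m
    (by push_cast; ring) (by push_cast; ring) x).1 hx'
  exact ⟨y, (LinearMap.congr_fun (congrArg ModuleCat.Hom.hom (resComplex_d L m 0)) y).trans hy⟩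

lemma resAug_epi : Epi (resAug L m) := by
  rw [ModuleCat.epi_iff_surjective]
  exact LinearMap.surjective_rangeRestrict (L.d (m - 1 - ((0:ℕ) : ℤ)) m).hom

noncomputable def resolution (hproj : ∀ n : ℤ, Projective (L.X n)) :
    ProjectiveResolution (resTarget L m) where
  complex := resComplex L m
  projective _ := hproj _
  π := resPi L m
  quasiIso := ⟨fun k => by
    cases k with
    | zero =>
      rw [ChainComplex.quasiIsoAt₀_iff, ShortComplex.quasiIso_iff_of_zeros']
      · refine (ShortComplex.exact_and_epi_g_iff_of_iso ?_).2
          ⟨resExact0 L m hex, resAug_epi L m⟩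
        refine ShortComplex.isoMk (Iso.refl _) (Iso.refl _) (Iso.refl _) ?_ ?_
        · exact (Category.id_comp _).trans (Category.comp_id _).symm
        · simp [resPi]
          exact (Category.id_comp _).trans (Category.comp_id _).symm
      · rfl
      · rfl
      · rfl
    | succ k =>
      rw [quasiIsoAt_iff_exactAt']
      · exact resComplex_exactAt_succ L m hex k
      · apply ChainComplex.exactAt_succ_single_obj⟩

lemma exact_congr {a b c a' b' c' : ℤ} (ha : a = a') (hb : b = b') (hc : c = c')
    (h : Function.Exact (fun f : L.X b →ₗ[A] A => f.comp (L.d a b).hom)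
      (fun f : L.X a →ₗ[A] A => f.comp (L.d c a).hom)) :
    Function.Exact (fun f : L.X b' →ₗ[A] A => f.comp (L.d a' b').hom)
      (fun f : L.X a' →ₗ[A] A => f.comp (L.d c' a').hom) := by
  subst ha hb hc; exact h

end Aux

/-- Let `A` be a commutative ring with `id_A(A) < ∞` and let `L` be an exact cochain
complex of finitely generated projective `A`-modules indexed by `ℤ`.  Then the dual
complex `Hom_A(L,A)` is exact; that is, for each `n` the sequence
`Hom(L.X (n+1), A) → Hom(L.X n, A) → Hom(L.X (n-1), A)` of precomposition maps is exact. -/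
theorem dual_complex_exact (A : Type u) [CommRing A]
    (hid : ∃ d : ℕ, ∀ (X : ModuleCat.{u} A) (i : ℕ), d < i →
      Subsingleton (((Ext ℤ (ModuleCat.{u} A) i).obj (Opposite.op X)).obj
        (ModuleCat.of A A)))
    (L : CochainComplex (ModuleCat.{u} A) ℤ)
    (hfg : ∀ n : ℤ, Module.Finite A (L.X n))
    (hproj : ∀ n : ℤ, Projective (L.X n))
    (hex : ∀ n : ℤ, L.ExactAt n) :
    ∀ n : ℤ, Function.Exact
      (fun φ : L.X (n+1) →ₗ[A] A => φ.comp (L.d n (n+1)).hom)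
      (fun φ : L.X n →ₗ[A] A => φ.comp (L.d (n-1) n).hom) := by
  obtain ⟨d, hd⟩ := hid
  intro n
  set m : ℤ := n + d + 2 with hm
  let P : ProjectiveResolution (resTarget L m) := resolution L m hex hproj
  let K := (resComplex L m).linearYonedaObj ℤ (ModuleCat.of A A)
  haveI := hd (resTarget L m) (d+1) (by omega)
  have iso := P.isoExt (R := ℤ) (d+1) (ModuleCat.of A A)
  haveI : Subsingleton (K.homology (d+1)) :=
    Equiv.subsingleton (((forget (ModuleCat ℤ)).mapIso iso).toEquiv.symm)
  have hzero : IsZero (K.homology (d+1)) := ModuleCat.isZero_of_subsingleton _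
  have hEx : K.ExactAt (d+1) :=
    (HomologicalComplex.exactAt_iff_isZero_homology _ _).2 hzero
  rw [HomologicalComplex.exactAt_iff' _ d (d+1) (d+2) (by simp) (by simp)] at hEx
  rw [ShortComplex.ShortExact.moduleCat_exact_iff_function_exact] at hEx
  have hEx0 : Function.Exact
      (fun f : L.X (m - 1 - ((d:ℕ):ℤ)) →ₗ[A] A => f.comp ((resComplex L m).d (d+1) d).hom)
      (fun f : L.X (m - 1 - ((d+1:ℕ):ℤ)) →ₗ[A] A => f.comp ((resComplex L m).d (d+2) (d+1)).hom) := by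
    intro g
    have key := hEx (ModuleCat.ofHom g)
    constructor
    · intro hg
      obtain ⟨f, hf⟩ := key.1 (ModuleCat.hom_ext hg)
      exact ⟨f.hom, congrArg ModuleCat.Hom.hom hf⟩
    · rintro ⟨f, rfl⟩
      exact congrArg ModuleCat.Hom.hom (key.2 ⟨ModuleCat.ofHom f, rfl⟩)
  have h1 := congrArg
    (fun g : L.X (m - 1 - ((d+1:ℕ):ℤ)) ⟶ L.X (m - 1 - ((d:ℕ):ℤ)) =>
      (fun f : L.X (m - 1 - ((d:ℕ):ℤ)) →ₗ[A] A => f.comp g.hom)) (resComplex_d L m d)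
  have h2 := congrArg
    (fun g : L.X (m - 1 - ((d+2:ℕ):ℤ)) ⟶ L.X (m - 1 - ((d+1:ℕ):ℤ)) =>
      (fun f : L.X (m - 1 - ((d+1:ℕ):ℤ)) →ₗ[A] A => f.comp g.hom)) (resComplex_d L m (d+1))
  have h1' : (fun f : L.X (m - 1 - ((d:ℕ):ℤ)) →ₗ[A] A => f.comp ((resComplex L m).d (d+1) d).hom)
      = (fun f : L.X (m - 1 - ((d:ℕ):ℤ)) →ₗ[A] A =>
          f.comp (L.d (m - 1 - ((d+1:ℕ):ℤ)) (m - 1 - ((d:ℕ):ℤ))).hom) := h1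
  have h2' : (fun f : L.X (m - 1 - ((d+1:ℕ):ℤ)) →ₗ[A] A => f.comp ((resComplex L m).d (d+2) (d+1)).hom)
      = (fun f : L.X (m - 1 - ((d+1:ℕ):ℤ)) →ₗ[A] A =>
          f.comp (L.d (m - 1 - ((d+2:ℕ):ℤ)) (m - 1 - ((d+1:ℕ):ℤ))).hom) := h2
  rw [h1', h2'] at hEx0
  exact exact_congr L (by push_cast [hm]; ring) (by push_cast [hm]; ring)
    (by push_cast [hm]; ring) hEx0
end

section
/- Let k be a field and let (A, m) be a commutative noetherian local k-algebra with dim_k(A/m) < ∞ which is m-adically complete. Let E be the A-submodule of Hom_k(A,k) consisting of those k-linear functionals f for which f vanishes on m^n for some n ≥ 1, where A acts on Hom_k(A,k) by (a·f)(x) = f(ax). Then for every finitely generated A-module Y, the natural A-linear map Y → Hom_k(Hom_A(Y,E), k), sending y to the functional g ↦ g(y)(1), is bijective. -/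
universe u

variable (k : Type u) (A : Type u) [Field k] [CommRing A] [Algebra k A]

/-- The action of `A` on `Hom_k(A,k)` given by `(a • f) x = f (a * x)`. -/
noncomputable instance dualSMul : SMul A (A →ₗ[k] k) :=
  ⟨fun a f => f ∘ₗ LinearMap.mulLeft k a⟩

lemma dual_smul_apply (a : A) (f : A →ₗ[k] k) (x : A) : (a • f) x = f (a * x) := rfl

/-- `Hom_k(A,k)` is an `A`-module via `(a • f) x = f (a * x)`. -/
noncomputable instance dualModule : Module A (A →ₗ[k] k) where
  one_smul f := LinearMap.ext fun x => by simp [dual_smul_apply]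
  mul_smul a b f := LinearMap.ext fun x => by
    simp only [dual_smul_apply]
    congr 1
    ring
  smul_zero a := rfl
  zero_smul f := LinearMap.ext fun x => by simp [dual_smul_apply]
  add_smul a b f := LinearMap.ext fun x => by
    simp [dual_smul_apply, add_mul]
  smul_add a f g := rfl

instance : IsScalarTower k A (A →ₗ[k] k) :=
  ⟨fun c a f => LinearMap.ext fun x => by
    simp only [dual_smul_apply, LinearMap.smul_apply, smul_mul_assoc, map_smul]⟩

instance : SMulCommClass A k (A →ₗ[k] k) :=
  ⟨fun _ _ _ => LinearMap.ext fun _ => rfl⟩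

variable [IsLocalRing A]

/-- The `m`-torsion submodule `E` of `Hom_k(A,k)`, consisting of the functionals that
vanish on a power of the maximal ideal `m`. -/
noncomputable def torsionDual : Submodule A (A →ₗ[k] k) where
  carrier := {f | ∃ n : ℕ, 1 ≤ n ∧ ∀ x ∈ (IsLocalRing.maximalIdeal A) ^ n, f x = 0}
  add_mem' := by
    rintro f g ⟨n, hn, hf⟩ ⟨m, hm, hg⟩
    refine ⟨n + m, by omega, fun x hx => ?_⟩
    have hxn : x ∈ (IsLocalRing.maximalIdeal A) ^ n :=
      Ideal.pow_le_pow_right (by omega) hx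
    have hxm : x ∈ (IsLocalRing.maximalIdeal A) ^ m :=
      Ideal.pow_le_pow_right (by omega) hx
    simp [LinearMap.add_apply, hf x hxn, hg x hxm]
  zero_mem' := ⟨1, le_refl 1, fun x _ => rfl⟩
  smul_mem' := by
    rintro a f ⟨n, hn, hf⟩
    exact ⟨n, hn, fun x hx => hf (a * x) (Ideal.mul_mem_left _ a hx)⟩

instance : SMulCommClass A k (torsionDual k A) :=
  ⟨fun a c x => Subtype.ext (smul_comm a c (x : A →ₗ[k] k))⟩

/-- The natural evaluation functional `y ↦ (g ↦ g(y)(1))` from `Y` to the `k`-linear dual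
of `Hom_A(Y, E)`. -/
noncomputable def evalFunctional (Y : Type u) [AddCommGroup Y] [Module A Y] (y : Y) :
    (Y →ₗ[A] torsionDual k A) →ₗ[k] k where
  toFun g := ((g y : torsionDual k A) : A →ₗ[k] k) 1
  map_add' g h := by simp
  map_smul' c g := by simp



/-! ### Auxiliary material for the proof -/

section Auxiliary

variable (k : Type u) [Field k]

/-- Extension of finite-dimensional by finite-dimensional is finite-dimensional. -/
lemma TD.fd_of_sub_quot {M : Type u} [AddCommGroup M] [Module k M] (N : Submodule k M)
    (h1 : FiniteDimensional k N) (h2 : FiniteDimensional k (M ⧸ N)) :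
    FiniteDimensional k M := by
  rw [FiniteDimensional, Module.finite_def] at *
  have hmap : (⊤ : Submodule k M).map N.mkQ = ⊤ := by
    rw [Submodule.map_top, Submodule.range_mkQ]
  refine Submodule.fg_of_fg_map_of_fg_inf_ker N.mkQ ?_ ?_
  · rw [hmap]; exact h2
  · rw [Submodule.ker_mkQ, top_inf_eq, ← Submodule.fg_top]; exact h1

variable (A : Type u) [CommRing A] [Algebra k A]

/-- A finite module killed by `I` with `A/I` finite dimensional is finite dimensional. -/
lemma TD.fd_of_smul_eq_bot (I : Ideal A) (hI : FiniteDimensional k (A ⧸ I))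
    (M : Type u) [AddCommGroup M] [Module A M] [Module k M] [IsScalarTower k A M]
    [Module.Finite A M] (h : I • (⊤ : Submodule A M) = ⊥) :
    FiniteDimensional k M := by
  classical
  obtain ⟨s, hs⟩ := Module.Finite.fg_top (R := A) (M := M)
  have hker : ∀ m : M, ∀ a ∈ I, a • m = 0 := by
    intro m a ha
    have : a • m ∈ I • (⊤ : Submodule A M) :=
      Submodule.smul_mem_smul ha Submodule.mem_top
    rw [h] at this; simpa using this
  let φ : M → (A →ₗ[k] M) := fun m =>
    { toFun := fun a => a • m
      map_add' := fun a b => add_smul a b m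
      map_smul' := fun c a => by simp [smul_assoc] }
  let ψ : M → (A ⧸ I.restrictScalars k) →ₗ[k] M := fun m =>
    Submodule.liftQ (I.restrictScalars k) (φ m) (by
      intro a ha
      simpa [φ] using hker m a ha)
  have hψ : ∀ m (a : A), ψ m (Submodule.Quotient.mk a) = a • m := fun m a => rfl
  have : FiniteDimensional k (A ⧸ I.restrictScalars k) :=
    FiniteDimensional.of_injective
      (Submodule.Quotient.restrictScalarsEquiv k I).toLinearMap
      (Submodule.Quotient.restrictScalarsEquiv k I).injective
  let Φ : ({x : M // x ∈ s} → (A ⧸ I.restrictScalars k)) →ₗ[k] M :=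
    { toFun := fun v => ∑ m : {x : M // x ∈ s}, ψ m.1 (v m)
      map_add' := fun v w => by simp [Finset.sum_add_distrib]
      map_smul' := fun c v => by simp [Finset.smul_sum] }
  have hΦ : Function.Surjective Φ := by
    intro x
    have hx : ∀ y : M, y ∈ Submodule.span A (s : Set M) → ∀ a : A, ∃ v, Φ v = a • y := by
      intro y hy
      induction hy using Submodule.span_induction with
      | mem z hz =>
        intro a
        refine ⟨Pi.single ⟨z, Finset.mem_coe.mp hz⟩ (Submodule.Quotient.mk a), ?_⟩
        simp only [Φ, LinearMap.coe_mk, AddHom.coe_mk]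
        show (∑ m : {x : M // x ∈ s}, ψ m.1 ((Pi.single (⟨z, Finset.mem_coe.mp hz⟩ : {x : M // x ∈ s}) (Submodule.Quotient.mk a : A ⧸ I.restrictScalars k) : {x : M // x ∈ s} → A ⧸ I.restrictScalars k) m)) = a • z
        rw [Finset.sum_eq_single (⟨z, Finset.mem_coe.mp hz⟩ : {x : M // x ∈ s})]
        · rw [Pi.single_eq_same]; exact hψ z a
        · intro b _ hb; rw [Pi.single_eq_of_ne hb]; simp
        · intro hb; exact absurd (Finset.mem_univ _) hb
      | zero => intro a; exact ⟨0, by simp⟩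
      | add y z _ _ hy hz =>
        intro a
        obtain ⟨v, hv⟩ := hy a
        obtain ⟨w, hw⟩ := hz a
        exact ⟨v + w, by rw [map_add, hv, hw, smul_add]⟩
      | smul b y _ hy =>
        intro a
        obtain ⟨v, hv⟩ := hy (a * b)
        exact ⟨v, by rw [hv, mul_smul]⟩
    obtain ⟨v, hv⟩ := hx x (hs ▸ Submodule.mem_top) 1
    exact ⟨v, by rw [hv, one_smul]⟩
  exact Module.Finite.of_surjective Φ hΦ

/-- A finite module killed by `I ^ n` with `A/I` finite dimensional is finite dimensional. -/
lemma TD.fd_of_pow_smul_eq_bot [IsNoetherianRing A] (I : Ideal A)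
    (hI : FiniteDimensional k (A ⧸ I)) (n : ℕ) :
    ∀ (M : Type u) [AddCommGroup M] [Module A M] [Module k M] [IsScalarTower k A M]
    [Module.Finite A M], I ^ n • (⊤ : Submodule A M) = ⊥ → FiniteDimensional k M := by
  induction n with
  | zero =>
    intro M _ _ _ _ _ h
    rw [pow_zero, Ideal.one_eq_top, Submodule.top_smul] at h
    haveI : Subsingleton M := subsingleton_of_forall_eq 0 (fun x => by
      have hx : x ∈ (⊥ : Submodule A M) := h ▸ Submodule.mem_top
      simpa using hx)
    infer_instance
  | succ n ih =>
    intro M _ _ _ _ _ h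
    set N : Submodule A M := I ^ n • (⊤ : Submodule A M) with hN
    haveI : IsNoetherian A M := isNoetherian_of_isNoetherianRing_of_finite A M
    haveI : Module.Finite A N := Module.Finite.iff_fg.mpr (IsNoetherian.noetherian N)
    have hNk : I • (⊤ : Submodule A N) = ⊥ := by
      apply Submodule.map_injective_of_injective (N.injective_subtype)
      rw [Submodule.map_smul'', Submodule.map_top, Submodule.range_subtype, Submodule.map_bot]
      rw [hN, ← Submodule.smul_assoc, smul_eq_mul, ← pow_succ'] at *
      exact h
    have hQk : I ^ n • (⊤ : Submodule A (M ⧸ N)) = ⊥ := by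
      have htop : (⊤ : Submodule A (M ⧸ N)) = Submodule.map N.mkQ ⊤ := by
        rw [Submodule.map_top, Submodule.range_mkQ]
      rw [eq_bot_iff, htop, ← Submodule.map_smul'']
      intro x hx
      obtain ⟨y, hy, rfl⟩ := hx
      rw [Submodule.mem_bot, Submodule.mkQ_apply, Submodule.Quotient.mk_eq_zero]
      exact hy
    have h1 : FiniteDimensional k N := TD.fd_of_smul_eq_bot k A I hI N hNk
    have h2 : FiniteDimensional k (M ⧸ N) := ih (M ⧸ N) hQk
    have e1 : FiniteDimensional k (N.restrictScalars k) := h1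
    have e2 : FiniteDimensional k (M ⧸ N.restrictScalars k) := by
      haveI := h2
      exact FiniteDimensional.of_injective
        (Submodule.Quotient.restrictScalarsEquiv k N).toLinearMap
        (Submodule.Quotient.restrictScalarsEquiv k N).injective
    exact TD.fd_of_sub_quot k (N.restrictScalars k) e1 e2

end Auxiliary

section Adic

open AdicCompletion in
lemma TD.of_ring_surjective {A : Type u} [CommRing A] (I : Ideal A) [IsAdicComplete I A] :
    Function.Surjective (AdicCompletion.of I A) := by
  intro x
  obtain ⟨f, rfl⟩ := AdicCompletion.mk_surjective I A x
  obtain ⟨L, hL⟩ := IsPrecomplete.prec (IsAdicComplete.toIsPrecomplete (I := I) (M := A))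
    (fun {m n} hmn => f.property hmn)
  refine ⟨L, AdicCompletion.ext fun n => ?_⟩
  simp only [AdicCompletion.of_apply, AdicCompletion.mk_apply_coe, Submodule.mkQ_apply]
  exact (SModEq.def.mp (hL n)).symm

open AdicCompletion in
lemma TD.of_module_surjective {A : Type u} [CommRing A] [IsNoetherianRing A] (I : Ideal A)
    [IsAdicComplete I A] (M : Type u) [AddCommGroup M] [Module A M] [Module.Finite A M] :
    Function.Surjective (AdicCompletion.of I M) := by
  intro x
  obtain ⟨t, rfl⟩ := (AdicCompletion.ofTensorProduct_bijective_of_finite_of_isNoetherian I M).2 x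
  induction t with
  | zero => exact ⟨0, by simp⟩
  | tmul a m =>
    obtain ⟨r, rfl⟩ := TD.of_ring_surjective I a
    refine ⟨r • m, ?_⟩
    rw [AdicCompletion.ofTensorProduct_tmul, map_smul]
    have : AdicCompletion.of I A r • AdicCompletion.of I M m
        = r • AdicCompletion.of I M m := by
      have halg : AdicCompletion.of I A r = algebraMap A (AdicCompletion I A) r := rfl
      rw [halg, algebraMap_smul]
    rw [this]
  | add t₁ t₂ h₁ h₂ =>
    obtain ⟨y₁, hy₁⟩ := h₁
    obtain ⟨y₂, hy₂⟩ := h₂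
    exact ⟨y₁ + y₂, by rw [map_add, map_add, hy₁, hy₂]⟩

end Adic

section Core

variable (k A : Type u) [Field k] [CommRing A] [Algebra k A] [IsLocalRing A]
variable (Y : Type u) [AddCommGroup Y] [Module A Y] [Module k Y] [IsScalarTower k A Y]

lemma TD.mem_torsionDual (f : A →ₗ[k] k) :
    f ∈ torsionDual k A ↔
      ∃ n : ℕ, 1 ≤ n ∧ ∀ x ∈ (IsLocalRing.maximalIdeal A) ^ n, f x = 0 :=
  Iff.rfl

/-- The map sending a functional on `Y/m^nY` to an `A`-linear map `Y → E`. -/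
noncomputable def TD.Phi (n : ℕ)
    (f : (Y ⧸ ((IsLocalRing.maximalIdeal A) ^ n • ⊤ : Submodule A Y)) →ₗ[k] k) :
    Y →ₗ[A] torsionDual k A where
  toFun y :=
    ⟨{ toFun := fun a => f (Submodule.Quotient.mk (a • y))
       map_add' := fun a b => by
         show f (Submodule.Quotient.mk ((a + b) • y))
           = f (Submodule.Quotient.mk (a • y)) + f (Submodule.Quotient.mk (b • y))
         rw [add_smul, Submodule.Quotient.mk_add, map_add]
       map_smul' := fun c a => by
         show f (Submodule.Quotient.mk ((c • a) • y)) = c • f (Submodule.Quotient.mk (a • y))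
         rw [smul_assoc, Submodule.Quotient.mk_smul, map_smul] },
     ⟨max n 1, le_max_right _ _, fun x hx => by
       have hx' : x ∈ (IsLocalRing.maximalIdeal A) ^ n :=
         Ideal.pow_le_pow_right (le_max_left _ _) hx
       have : x • y ∈ ((IsLocalRing.maximalIdeal A) ^ n • ⊤ : Submodule A Y) :=
         Submodule.smul_mem_smul hx' Submodule.mem_top
       show f (Submodule.Quotient.mk (x • y)) = 0
       rw [(Submodule.Quotient.mk_eq_zero _).mpr this, map_zero]⟩⟩
  map_add' y z := by
    apply Subtype.ext
    apply LinearMap.ext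
    intro a
    show f (Submodule.Quotient.mk (a • (y + z)))
      = f (Submodule.Quotient.mk (a • y)) + f (Submodule.Quotient.mk (a • z))
    rw [smul_add, Submodule.Quotient.mk_add, map_add]
  map_smul' b y := by
    apply Subtype.ext
    apply LinearMap.ext
    intro a
    show f (Submodule.Quotient.mk (a • b • y)) = f (Submodule.Quotient.mk ((b * a) • y))
    rw [smul_smul, mul_comm]

lemma TD.Phi_apply (n : ℕ)
    (f : (Y ⧸ ((IsLocalRing.maximalIdeal A) ^ n • ⊤ : Submodule A Y)) →ₗ[k] k)
    (y : Y) (a : A) :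
    ((TD.Phi k A Y n f y : torsionDual k A) : A →ₗ[k] k) a
      = f (Submodule.Quotient.mk (a • y)) := rfl

/-- `TD.Phi` bundled as a `k`-linear map. -/
noncomputable def TD.PhiL (n : ℕ) :
    ((Y ⧸ ((IsLocalRing.maximalIdeal A) ^ n • ⊤ : Submodule A Y)) →ₗ[k] k)
      →ₗ[k] (Y →ₗ[A] torsionDual k A) where
  toFun := TD.Phi k A Y n
  map_add' f g := by
    apply LinearMap.ext
    intro y
    apply Subtype.ext
    apply LinearMap.ext
    intro a
    rfl
  map_smul' c f := by
    apply LinearMap.ext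
    intro y
    apply Subtype.ext
    apply LinearMap.ext
    intro a
    rfl

lemma TD.Phi_compat {m n : ℕ} (hmn : m ≤ n)
    (f : (Y ⧸ ((IsLocalRing.maximalIdeal A) ^ m • ⊤ : Submodule A Y)) →ₗ[k] k) :
    TD.Phi k A Y m f
      = TD.Phi k A Y n (f ∘ₗ ((AdicCompletion.transitionMap
          (IsLocalRing.maximalIdeal A) Y hmn).restrictScalars k)) := by
  apply LinearMap.ext
  intro y
  apply Subtype.ext
  apply LinearMap.ext
  intro a
  show f (Submodule.Quotient.mk (a • y))
    = f (AdicCompletion.transitionMap (IsLocalRing.maximalIdeal A) Y hmn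
        (Submodule.Quotient.mk (a • y)))
  rfl

/-- Every `A`-linear map `Y → E` factors through some `Y/m^nY`. -/
lemma TD.exists_phi [Module.Finite A Y] (g : Y →ₗ[A] torsionDual k A) :
    ∃ (n : ℕ) (f : (Y ⧸ ((IsLocalRing.maximalIdeal A) ^ n • ⊤ : Submodule A Y)) →ₗ[k] k),
      TD.Phi k A Y n f = g ∧
      ∀ y : Y, f (Submodule.Quotient.mk y) = ((g y : torsionDual k A) : A →ₗ[k] k) 1 := by
  classical
  obtain ⟨s, hs⟩ := Module.Finite.fg_top (R := A) (M := Y)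
  -- a uniform power of the maximal ideal killing all values of `g` on `s`
  have huni : ∀ t : Finset Y, ∃ n : ℕ, ∀ z ∈ t, ∀ x ∈ (IsLocalRing.maximalIdeal A) ^ n,
      ((g z : torsionDual k A) : A →ₗ[k] k) x = 0 := by
    intro t
    induction t using Finset.induction_on with
    | empty => exact ⟨1, fun z hz => absurd hz (Finset.notMem_empty z)⟩
    | @insert a s' ha ih =>
      obtain ⟨n1, hn1⟩ := ih
      obtain ⟨n2, -, hn2⟩ := (TD.mem_torsionDual k A _).mp (g a).2
      refine ⟨max n1 n2, fun z hzmem x hx => ?_⟩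
      rcases Finset.mem_insert.mp hzmem with rfl | hz'
      · exact hn2 x (Ideal.pow_le_pow_right (le_max_right _ _) hx)
      · exact hn1 z hz' x (Ideal.pow_le_pow_right (le_max_left _ _) hx)
  obtain ⟨n, hn⟩ := huni s
  -- all values of `g` vanish on `m ^ n`
  have hall : ∀ y : Y, ∀ x ∈ (IsLocalRing.maximalIdeal A) ^ n,
      ((g y : torsionDual k A) : A →ₗ[k] k) x = 0 := by
    intro y
    have hy : y ∈ Submodule.span A (s : Set Y) := hs ▸ Submodule.mem_top
    induction hy using Submodule.span_induction with
    | mem z hz => exact hn z (Finset.mem_coe.mp hz)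
    | zero => intro x hx; rw [map_zero]; rfl
    | add y z _ _ hy hz =>
      intro x hx
      rw [map_add]
      show ((g y : torsionDual k A) : A →ₗ[k] k) x
        + ((g z : torsionDual k A) : A →ₗ[k] k) x = 0
      rw [hy x hx, hz x hx, add_zero]
    | smul b y _ hy =>
      intro x hx
      rw [map_smul]
      show ((g y : torsionDual k A) : A →ₗ[k] k) (b * x) = 0
      exact hy (b * x) (Ideal.mul_mem_left _ b hx)
  -- the functional `y ↦ g(y)(1)` on `Y`
  let F : Y →ₗ[k] k :=
    { toFun := fun y => ((g y : torsionDual k A) : A →ₗ[k] k) 1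
      map_add' := fun y z => by
        show ((g (y + z) : torsionDual k A) : A →ₗ[k] k) 1 = _
        rw [map_add]; rfl
      map_smul' := fun c y => by
        show ((g (c • y) : torsionDual k A) : A →ₗ[k] k) 1
          = c • ((g y : torsionDual k A) : A →ₗ[k] k) 1
        rw [← algebraMap_smul A c y, map_smul]
        show ((g y : torsionDual k A) : A →ₗ[k] k) (algebraMap k A c * 1) = _
        rw [mul_one, Algebra.algebraMap_eq_smul_one, map_smul] }
  have hF : ∀ y ∈ (((IsLocalRing.maximalIdeal A) ^ n • ⊤ :
      Submodule A Y).restrictScalars k), F y = 0 := by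
    intro y hy
    rw [Submodule.restrictScalars_mem] at hy
    refine Submodule.smul_induction_on hy ?_ ?_
    · intro a ha z _
      show ((g (a • z) : torsionDual k A) : A →ₗ[k] k) 1 = 0
      rw [map_smul]
      show ((g z : torsionDual k A) : A →ₗ[k] k) (a * 1) = 0
      rw [mul_one]
      exact hall z a ha
    · intro u v hu hv
      show F (u + v) = 0
      rw [map_add, hu, hv, add_zero]
  let f : (Y ⧸ ((IsLocalRing.maximalIdeal A) ^ n • ⊤ : Submodule A Y)) →ₗ[k] k :=
    (Submodule.liftQ _ F hF) ∘ₗ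
      (Submodule.Quotient.restrictScalarsEquiv k
        ((IsLocalRing.maximalIdeal A) ^ n • ⊤ : Submodule A Y)).symm.toLinearMap
  have hfmk : ∀ y : Y, f (Submodule.Quotient.mk y)
      = ((g y : torsionDual k A) : A →ₗ[k] k) 1 := by
    intro y
    show Submodule.liftQ _ F hF
      ((Submodule.Quotient.restrictScalarsEquiv k _).symm (Submodule.Quotient.mk y)) = _
    rw [Submodule.Quotient.restrictScalarsEquiv_symm_mk]
    rfl
  refine ⟨n, f, ?_, hfmk⟩
  apply LinearMap.ext
  intro y
  apply Subtype.ext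
  apply LinearMap.ext
  intro a
  rw [TD.Phi_apply, hfmk (a • y), map_smul]
  show ((g y : torsionDual k A) : A →ₗ[k] k) (a * 1) = _
  rw [mul_one]

/-- The quotient by `J • ⊤` is killed by `J`. -/
lemma TD.smul_top_quot_eq_bot (J : Ideal A) :
    J • (⊤ : Submodule A (Y ⧸ (J • ⊤ : Submodule A Y))) = ⊥ := by
  have htop : (⊤ : Submodule A (Y ⧸ (J • ⊤ : Submodule A Y)))
      = Submodule.map (J • ⊤ : Submodule A Y).mkQ ⊤ := by
    rw [Submodule.map_top, Submodule.range_mkQ]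
  rw [eq_bot_iff, htop, ← Submodule.map_smul'']
  intro x hx
  obtain ⟨y, hy, rfl⟩ := hx
  rw [Submodule.mem_bot, Submodule.mkQ_apply, Submodule.Quotient.mk_eq_zero]
  exact hy

end Core

/-- Let `(A,m)` be a commutative noetherian local `k`-algebra with `dim_k(A/m) < ∞` which
is `m`-adically complete, and let `E ⊆ Hom_k(A,k)` be the `m`-torsion submodule of the
`k`-linear dual of `A`.  Then for every finitely generated `A`-module `Y` the natural map
`Y → Hom_k(Hom_A(Y,E), k)`, `y ↦ (g ↦ g(y)(1))`, is bijective. -/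
theorem bijective_evalFunctional [IsNoetherianRing A]
    (hfd : FiniteDimensional k (A ⧸ IsLocalRing.maximalIdeal A))
    (hcomplete : IsAdicComplete (IsLocalRing.maximalIdeal A) A)
    (Y : Type u) [AddCommGroup Y] [Module A Y] [Module.Finite A Y] :
    Function.Bijective (fun y : Y => evalFunctional k A Y y) := by
  classical
  letI : Module k Y := Module.compHom Y (algebraMap k A)
  haveI : IsScalarTower k A Y :=
    ⟨fun c a y => by
      show (c • a) • y = (algebraMap k A c) • (a • y)
      rw [Algebra.smul_def, mul_smul]⟩
  haveI := hcomplete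
  have fdq : ∀ n : ℕ, FiniteDimensional k
      (Y ⧸ ((IsLocalRing.maximalIdeal A) ^ n • ⊤ : Submodule A Y)) := fun n =>
    TD.fd_of_pow_smul_eq_bot k A (IsLocalRing.maximalIdeal A) hfd n _
      (TD.smul_top_quot_eq_bot A Y ((IsLocalRing.maximalIdeal A) ^ n))
  constructor
  · -- injectivity
    intro y₁ y₂ hy
    by_contra hne
    have hy0 : y₁ - y₂ ≠ 0 := sub_ne_zero.mpr hne
    have hg0 : ∀ g : Y →ₗ[A] torsionDual k A,
        ((g (y₁ - y₂) : torsionDual k A) : A →ₗ[k] k) 1 = 0 := by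
      intro g
      have h1 : ((g y₁ : torsionDual k A) : A →ₗ[k] k) 1
          = ((g y₂ : torsionDual k A) : A →ₗ[k] k) 1 := LinearMap.congr_fun hy g
      rw [map_sub]
      show ((g y₁ - g y₂ : torsionDual k A) : A →ₗ[k] k) 1 = 0
      rw [AddSubgroupClass.coe_sub, LinearMap.sub_apply, h1, sub_self]
    obtain ⟨n, hn⟩ : ∃ n : ℕ,
        (y₁ - y₂) ∉ ((IsLocalRing.maximalIdeal A) ^ n • ⊤ : Submodule A Y) := by
      by_contra hc
      push_neg at hc
      have hmem : y₁ - y₂ ∈ (⨅ n : ℕ, (IsLocalRing.maximalIdeal A) ^ n • ⊤ : Submodule A Y) :=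
        Submodule.mem_iInf _ |>.mpr hc
      have hbot : (⨅ i : ℕ, (IsLocalRing.maximalIdeal A) ^ i • ⊤ : Submodule A Y) = ⊥ :=
        (IsLocalRing.maximalIdeal A).iInf_pow_smul_eq_bot_of_isLocalRing (M := Y)
          (Ideal.IsMaximal.ne_top (IsLocalRing.maximalIdeal.isMaximal A))
      rw [hbot] at hmem
      exact hy0 ((Submodule.mem_bot A).mp hmem)
    have hmk : (Submodule.Quotient.mk (y₁ - y₂) :
        Y ⧸ ((IsLocalRing.maximalIdeal A) ^ n • ⊤ : Submodule A Y)) ≠ 0 := by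
      rwa [ne_eq, Submodule.Quotient.mk_eq_zero]
    haveI := fdq n
    obtain ⟨f, hf⟩ : ∃ f : (Y ⧸ ((IsLocalRing.maximalIdeal A) ^ n • ⊤ : Submodule A Y)) →ₗ[k] k,
        f (Submodule.Quotient.mk (y₁ - y₂)) ≠ 0 := by
      by_contra hc
      push_neg at hc
      exact hmk ((Module.forall_dual_apply_eq_zero_iff k _).mp hc)
    apply hf
    have h2 := hg0 (TD.Phi k A Y n f)
    rw [TD.Phi_apply] at h2
    rwa [one_smul] at h2
  · -- surjectivity
    intro η
    let ξ : ∀ n : ℕ, Module.Dual k (Module.Dual k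
        (Y ⧸ ((IsLocalRing.maximalIdeal A) ^ n • ⊤ : Submodule A Y))) :=
      fun n => η ∘ₗ TD.PhiL k A Y n
    let v : ∀ n : ℕ, Y ⧸ ((IsLocalRing.maximalIdeal A) ^ n • ⊤ : Submodule A Y) :=
      fun n => haveI := fdq n; (Module.evalEquiv k _).symm (ξ n)
    have hv : ∀ (n : ℕ)
        (f : (Y ⧸ ((IsLocalRing.maximalIdeal A) ^ n • ⊤ : Submodule A Y)) →ₗ[k] k),
        f (v n) = η (TD.Phi k A Y n f) := by
      intro n f
      haveI := fdq n
      exact Module.apply_evalEquiv_symm_apply k _ f (ξ n)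
    have hcoh : ∀ {m n : ℕ} (hmn : m ≤ n),
        AdicCompletion.transitionMap (IsLocalRing.maximalIdeal A) Y hmn (v n) = v m := by
      intro m n hmn
      haveI := fdq m
      rw [← sub_eq_zero]
      refine (Module.forall_dual_apply_eq_zero_iff k _).mp (fun f => ?_) 
      rw [map_sub, hv m f, TD.Phi_compat k A Y hmn f]
      have h3 : f (AdicCompletion.transitionMap (IsLocalRing.maximalIdeal A) Y hmn (v n))
          = (f ∘ₗ ((AdicCompletion.transitionMap (IsLocalRing.maximalIdeal A) Y
              hmn).restrictScalars k)) (v n) := rfl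
      rw [h3, hv n _]
      exact sub_self _
    have hrep : ∀ n : ℕ, ∃ w : Y, (Submodule.Quotient.mk w :
        Y ⧸ ((IsLocalRing.maximalIdeal A) ^ n • ⊤ : Submodule A Y)) = v n :=
      fun n => Submodule.Quotient.mk_surjective _ (v n)
    choose w hw using hrep
    have hcauchy : ∀ {m n : ℕ}, m ≤ n →
        w m ≡ w n [SMOD ((IsLocalRing.maximalIdeal A) ^ m • ⊤ : Submodule A Y)] := by
      intro m n hmn
      rw [SModEq.def]
      rw [hw m]
      rw [show (Submodule.Quotient.mk (w n) :
            Y ⧸ ((IsLocalRing.maximalIdeal A) ^ m • ⊤ : Submodule A Y))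
          = AdicCompletion.transitionMap (IsLocalRing.maximalIdeal A) Y hmn
              (Submodule.Quotient.mk (w n)) from
        rfl]
      rw [hw n, hcoh hmn]
    obtain ⟨y, hy⟩ := TD.of_module_surjective (IsLocalRing.maximalIdeal A) Y
      (AdicCompletion.mk (IsLocalRing.maximalIdeal A) Y ⟨w, fun {m n} hmn => hcauchy hmn⟩)
    have hyv : ∀ n : ℕ, (Submodule.Quotient.mk y :
        Y ⧸ ((IsLocalRing.maximalIdeal A) ^ n • ⊤ : Submodule A Y)) = v n := by
      intro n
      have h1 := congrArg (fun z => z.val n) hy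
      simp only [AdicCompletion.of_apply, AdicCompletion.mk_apply_coe,
        Submodule.mkQ_apply] at h1
      rw [h1]; exact hw n
    refine ⟨y, ?_⟩
    show evalFunctional k A Y y = η
    apply LinearMap.ext
    intro g
    obtain ⟨n, f, hfg, hfmk⟩ := TD.exists_phi k A Y g
    show ((g y : torsionDual k A) : A →ₗ[k] k) 1 = η g
    rw [← hfmk y, hyv n, hv n f, hfg]
end

section
/- Let k be a field and let (A, m) be a commutative noetherian local k-algebra with dim_k(A/m) < ∞. Let E be the A-submodule of Hom_k(A,k) consisting of those k-linear functionals f for which f vanishes on m^n for some n ≥ 1, where A acts on Hom_k(A,k) by (a·f)(x) = f(ax). Then for every finitely generated A-module Y, the k-linear map Hom_A(Y,E) → Hom_k(Y,k), sending g to the functional y ↦ g(y)(1), is injective, and its image is exactly the set of k-linear functionals h : Y → k for which h vanishes on m^n·Y for some n ≥ 1. -/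
/-!
Evaluation at `1` identifies `Hom_A(Y, Hom_k(A, k))` with `Hom_k(Y, k)`, the inverse sending `h`
to `y ↦ (a ↦ h (a • y))`. Hence `restrictFunctional` is injective, and `h` lies in its image
exactly when this adjoint map lands in `E`. Now `E` is the increasing union over `n` of the
submodules of functionals killing `m ^ n`, and the image of a finitely generated `Y` is a finitely
generated, i.e. compact, submodule, so it lies in `E` iff it lies in one of them, i.e. iff `h`
kills `m ^ n • Y`.
-/

universe u

variable (k : Type u) (A : Type u) [Field k] [CommRing A] [Algebra k A]

variable [IsLocalRing A]

/-- The natural map `Hom_A(Y,E) → Hom_k(Y,k)`, `g ↦ (y ↦ g(y)(1))`. -/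
noncomputable def restrictFunctional (Y : Type u) [AddCommGroup Y] [Module k Y]
    [Module A Y] [IsScalarTower k A Y] (g : Y →ₗ[A] torsionDual k A) : Y →ₗ[k] k where
  toFun y := ((g y : torsionDual k A) : A →ₗ[k] k) 1
  map_add' y z := by simp
  map_smul' c y := by
    have h1 : g (c • y) = (algebraMap k A c) • g y := by
      rw [← algebraMap_smul A c y, map_smul]
    have h2 : ((algebraMap k A c • g y : torsionDual k A) : A →ₗ[k] k) =
        algebraMap k A c • ((g y : torsionDual k A) : A →ₗ[k] k) := rfl
    show ((g (c • y) : torsionDual k A) : A →ₗ[k] k) 1 =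
      (RingHom.id k) c • ((g y : torsionDual k A) : A →ₗ[k] k) 1
    rw [h1, h2, dual_smul_apply, mul_one, Algebra.algebraMap_eq_smul_one, map_smul,
      smul_eq_mul, smul_eq_mul, RingHom.id_apply]

theorem IsCompactElement.exists_le_of_le_iSup_of_monotone {α ι : Type*}
    [CompleteLattice α] [SemilatticeSup ι] [OrderBot ι] {c : α} (hc : IsCompactElement c)
    {f : ι → α} (hf : Monotone f) (h : c ≤ ⨆ i, f i) : ∃ i, c ≤ f i := by
  obtain ⟨s, hs⟩ := CompleteLattice.IsCompactElement.exists_finset_of_le_iSup _ hc f h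
  exact ⟨s.sup id, hs.trans (iSup₂_le fun i hi => hf (Finset.le_sup (f := id) hi))⟩

section DualOfFunctional

variable {K R : Type u} [Field K] [CommRing R] [Algebra K R]

noncomputable def dualVanishing (I : Ideal R) : Submodule R (R →ₗ[K] K) where
  carrier := {f | ∀ x ∈ I, f x = 0}
  add_mem' hf hg x hx := by rw [LinearMap.add_apply, hf x hx, hg x hx, add_zero]
  zero_mem' _ _ := rfl
  smul_mem' a _ hf x hx := hf (a * x) (I.mul_mem_left a hx)

theorem dualVanishing_pow_monotone (I : Ideal R) :
    Monotone fun n : ℕ => dualVanishing (K := K) (I ^ n) :=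
  fun _ _ hmn _ hf x hx => hf x (Ideal.pow_le_pow_right hmn hx)

variable {M : Type u} [AddCommGroup M] [Module K M] [Module R M] [IsScalarTower K R M]

/-- One direction of the adjunction `Hom_K(M, K) ≃ Hom_R(M, Hom_K(R, K))`; evaluation at `1`,
as in `restrictFunctional`, is the other. -/
noncomputable def dualOfFunctional (h : M →ₗ[K] K) : M →ₗ[R] (R →ₗ[K] K) where
  toFun y :=
    { toFun a := h (a • y)
      map_add' a b := by rw [add_smul, map_add]
      map_smul' c a := by rw [smul_assoc, map_smul, RingHom.id_apply] }
  map_add' y z := LinearMap.ext fun a => by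
    simp only [smul_add, map_add, LinearMap.coe_mk, AddHom.coe_mk, LinearMap.add_apply]
  map_smul' b y := LinearMap.ext fun a =>
    show h (a • b • y) = h ((b * a) • y) by rw [smul_smul, mul_comm]

theorem range_dualOfFunctional_le_dualVanishing_iff (h : M →ₗ[K] K) (I : Ideal R) :
    LinearMap.range (dualOfFunctional h) ≤ dualVanishing I ↔
      ∀ y ∈ I • (⊤ : Submodule R M), h y = 0 := by
  constructor
  · intro hle y hy
    refine Submodule.smul_induction_on hy (fun a ha z _ => hle ⟨z, rfl⟩ a ha) ?_
    intro y z hy hz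
    rw [map_add, hy, hz, add_zero]
  · rintro hv _ ⟨y, rfl⟩ a ha
    exact hv (a • y) (Submodule.smul_mem_smul ha trivial)

end DualOfFunctional

theorem torsionDual_le_iSup_dualVanishing :
    torsionDual k A ≤ ⨆ n, dualVanishing (IsLocalRing.maximalIdeal A ^ n) :=
  fun _ ⟨n, _, hf⟩ => Submodule.mem_iSup_of_mem n hf

-- `m ^ 0 = A`, hence the shift to `n + 1` to meet the condition `1 ≤ n` of `torsionDual`.
theorem fg_le_torsionDual_iff {N : Submodule A (A →ₗ[k] k)} (hN : N.FG) :
    N ≤ torsionDual k A ↔ ∃ n, 1 ≤ n ∧ N ≤ dualVanishing (IsLocalRing.maximalIdeal A ^ n) := by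
  constructor
  · intro hle
    obtain ⟨n, hn⟩ := ((Submodule.fg_iff_compact N).mp hN).exists_le_of_le_iSup_of_monotone
      (dualVanishing_pow_monotone _)
      (hle.trans (torsionDual_le_iSup_dualVanishing k A))
    exact ⟨n + 1, Nat.le_add_left 1 n,
      hn.trans (dualVanishing_pow_monotone _ n.le_succ)⟩
  · rintro ⟨n, hn, hle⟩ f hf
    exact ⟨n, hn, hle hf⟩

section RestrictFunctional

variable (Y : Type u) [AddCommGroup Y] [Module k Y] [Module A Y] [IsScalarTower k A Y]

theorem subtype_comp_eq_dualOfFunctional_restrictFunctional (g : Y →ₗ[A] torsionDual k A) :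
    (torsionDual k A).subtype ∘ₗ g = dualOfFunctional (R := A) (restrictFunctional k A Y g) :=
  LinearMap.ext fun y => LinearMap.ext fun a => by
    show (g y : A →ₗ[k] k) a = (g (a • y) : A →ₗ[k] k) 1
    rw [map_smul]
    exact congrArg (g y : A →ₗ[k] k) (mul_one a).symm

theorem restrictFunctional_injective : Function.Injective (restrictFunctional k A Y) := by
  intro g₁ g₂ hg
  have hcomp := congrArg (dualOfFunctional (R := A)) hg
  rw [← subtype_comp_eq_dualOfFunctional_restrictFunctional,
    ← subtype_comp_eq_dualOfFunctional_restrictFunctional] at hcomp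
  exact LinearMap.ext fun y => Subtype.ext (LinearMap.congr_fun hcomp y)

theorem mem_range_restrictFunctional_iff (h : Y →ₗ[k] k) :
    h ∈ Set.range (restrictFunctional k A Y) ↔
      LinearMap.range (dualOfFunctional (R := A) (M := Y) h) ≤ torsionDual k A := by
  constructor
  · rintro ⟨g, rfl⟩
    rw [← subtype_comp_eq_dualOfFunctional_restrictFunctional, LinearMap.range_comp]
    exact Submodule.map_subtype_le _ _
  · intro hle
    refine ⟨(dualOfFunctional h).codRestrict _ fun y => hle ⟨y, rfl⟩, LinearMap.ext fun y => ?_⟩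
    exact congrArg h (one_smul A y)

end RestrictFunctional

theorem injective_range_restrictFunctional
    (Y : Type u) [AddCommGroup Y] [Module k Y] [Module A Y] [IsScalarTower k A Y]
    [Module.Finite A Y] :
    Function.Injective (restrictFunctional k A Y) ∧
      Set.range (restrictFunctional k A Y) =
        {h : Y →ₗ[k] k | ∃ n : ℕ, 1 ≤ n ∧
          ∀ y ∈ (IsLocalRing.maximalIdeal A ^ n) • (⊤ : Submodule A Y), h y = 0} := by
  refine ⟨restrictFunctional_injective k A Y, Set.ext fun h => ?_⟩
  rw [mem_range_restrictFunctional_iff, fg_le_torsionDual_iff k A (Submodule.fg_range _)]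
  simp only [range_dualOfFunctional_le_dualVanishing_iff]
  rfl
end
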